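/- arXiv:2309.04927 — 2 statements merged into one kernel-verified Lean document; each statement's English description precedes it below -/
import Mathlib

section
/- Let G be an ample Hausdorff groupoid with compact unit space such that G = Iso(G) (every element is isotropy) and there exist two distinct units u ≠ v with nontrivial isotropy groups G^u_u and G^v_v. Then the natural representation π: ℂF(G) → A(G) sending δ_U to 1_U is not injective. -/
open scoped Classical

/-- A groupoid encoded as a "groupoid with zero": the partially defined composition is
totalised by declaring non-composable products to be `0`.  The actual groupoid elements are
the nonzero elements; the range and source of a nonzero `a` are `a * a⁻¹` and `a⁻¹ * a`. -/
class GroupoidZ (G : Type*) extends Mul G, Inv G, Zero G where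
  zero_mul' : ∀ a : G, 0 * a = 0
  mul_zero' : ∀ a : G, a * 0 = 0
  inv_zero' : (0 : G)⁻¹ = 0
  inv_inv' : ∀ a : G, a⁻¹⁻¹ = a
  mul_assoc' : ∀ a b c : G, a * b ≠ 0 → b * c ≠ 0 → a * b * c = a * (b * c)
  mul_ne_zero_iff' : ∀ a b : G, a ≠ 0 → b ≠ 0 → (a * b ≠ 0 ↔ a⁻¹ * a = b * b⁻¹)
  mul_inv_self_mul' : ∀ a : G, a * a⁻¹ * a = a
  mul_inv_rev' : ∀ a b : G, (a * b)⁻¹ = b⁻¹ * a⁻¹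

/-- The unit space `G⁰`: the nonzero idempotents. -/
def unitSpace (G : Type*) [GroupoidZ G] : Set G := {e | e ≠ 0 ∧ e * e = e}

/-- A bisection: a set of groupoid elements on which range and source are injective. -/
def IsBisection {G : Type*} [GroupoidZ G] (B : Set G) : Prop :=
  (0 : G) ∉ B ∧ (∀ a ∈ B, ∀ b ∈ B, a * a⁻¹ = b * b⁻¹ → a = b) ∧
    (∀ a ∈ B, ∀ b ∈ B, a⁻¹ * a = b⁻¹ * b → a = b)

/-- A set is full if its range and source images are the whole unit space. -/
def IsFull {G : Type*} [GroupoidZ G] (B : Set G) : Prop :=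
  (fun a => a * a⁻¹) '' B = unitSpace G ∧ (fun a => a⁻¹ * a) '' B = unitSpace G

/-- Compact open bisection. -/
def IsCOB {G : Type*} [GroupoidZ G] [TopologicalSpace G] (B : Set G) : Prop :=
  IsBisection B ∧ IsCompact B ∧ IsOpen B

/-- The product `AB = {αβ : (α,β) composable}` of two subsets of a groupoid. -/
def setMul {G : Type*} [GroupoidZ G] (A B : Set G) : Set G := Set.image2 (· * ·) A B \ {0}

/-- The inverse `B⁻¹ = {γ⁻¹ : γ ∈ B}` of a subset of a groupoid. -/
def setInv {G : Type*} [GroupoidZ G] (B : Set G) : Set G := Inv.inv '' B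

/-- The topological full group `F(G)`: all full compact open bisections. -/
def fullBisections (G : Type*) [GroupoidZ G] [TopologicalSpace G] : Set (Set G) :=
  {B | IsCOB B ∧ IsFull B}

/-- Indicator function `1_B : G → ℂ`. -/
noncomputable def indic {G : Type*} [GroupoidZ G] (B : Set G) : G → ℂ := Set.indicator B 1

/-- Convolution product on functions `G → ℂ`: `(f * g)(γ) = ∑_{αβ = γ} f(α) g(β)`. -/
noncomputable def convol {G : Type*} [GroupoidZ G] (f g : G → ℂ) : G → ℂ := fun γ =>
  if γ = 0 then 0 else ∑ᶠ p ∈ {p : G × G | p.1 * p.2 = γ}, f p.1 * g p.2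

/-- The `*`-involution `f^*(γ) = conj (f (γ⁻¹))`. -/
noncomputable def starF {G : Type*} [GroupoidZ G] (f : G → ℂ) : G → ℂ := fun γ =>
  (starRingEnd ℂ) (f γ⁻¹)

/-- An ample Hausdorff (étale) groupoid: Hausdorff, locally compact, continuous inversion
and (partial) multiplication, the unit space is open and closed, the range map is open,
and there is a basis of compact open bisections.  The adjoined `0` is an isolated point. -/
class AmpleGroupoid (G : Type*) [TopologicalSpace G] extends GroupoidZ G where
  t2' : T2Space G
  locallyCompact' : LocallyCompactSpace G
  isolated_zero' : IsOpen {(0 : G)}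
  continuous_inv' : Continuous (fun a : G => a⁻¹)
  continuousOn_mul' : ContinuousOn (fun p : G × G => p.1 * p.2) {p : G × G | p.1 * p.2 ≠ 0}
  isOpen_unitSpace' : IsOpen (unitSpace G)
  isClosed_unitSpace' : IsClosed (unitSpace G)
  isOpenMap_range' : ∀ B : Set G, IsOpen B → (0 : G) ∉ B → IsOpen ((fun a => a * a⁻¹) '' B)
  ample_basis' : ∀ (a : G) (U : Set G), a ≠ 0 → IsOpen U → a ∈ U →
    ∃ B : Set G, IsCOB B ∧ a ∈ B ∧ B ⊆ U

/-- The image `π(ℂF(G))` of the representation of the topological full group: the span of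
the indicator functions of full compact open bisections. -/
noncomputable def spanFull (G : Type*) [GroupoidZ G] [TopologicalSpace G] :
    Submodule ℂ (G → ℂ) :=
  Submodule.span ℂ {f | ∃ B ∈ fullBisections G, f = indic B}

/-- The Steinberg algebra `A(G)` (as a subspace of `G → ℂ`): the span of the indicator
functions of compact open bisections. -/
noncomputable def steinberg (G : Type*) [GroupoidZ G] [TopologicalSpace G] :
    Submodule ℂ (G → ℂ) :=
  Submodule.span ℂ {f | ∃ B : Set G, IsCOB B ∧ f = indic B}

section AuxGZ

variable {G : Type*} [GroupoidZ G]

open GroupoidZ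

lemma gz_mul_inv_ne_zero {a : G} (ha : a ≠ 0) : a * a⁻¹ ≠ 0 := by
  intro h
  have h2 := mul_inv_self_mul' a
  rw [h, zero_mul'] at h2
  exact ha h2.symm

lemma gz_inv_ne_zero {a : G} (ha : a ≠ 0) : a⁻¹ ≠ 0 := by
  intro h; apply ha; rw [← inv_inv' a, h, inv_zero']

lemma gz_inv_mul_ne_zero {a : G} (ha : a ≠ 0) : a⁻¹ * a ≠ 0 := by
  have := gz_mul_inv_ne_zero (gz_inv_ne_zero ha)
  rwa [inv_inv'] at this

lemma gz_inv_mul_self_mul (a : G) : a⁻¹ * a * a⁻¹ = a⁻¹ := by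
  have := mul_inv_self_mul' (a⁻¹); rwa [inv_inv'] at this

lemma gz_source_idem {a : G} (ha : a ≠ 0) : (a⁻¹ * a) * (a⁻¹ * a) = a⁻¹ * a := by
  have h1 : (a⁻¹ * a) * a⁻¹ ≠ 0 := by
    rw [gz_inv_mul_self_mul]; exact gz_inv_ne_zero ha
  have h2 : a⁻¹ * a ≠ 0 := gz_inv_mul_ne_zero ha
  have h3 := mul_assoc' (a⁻¹ * a) a⁻¹ a h1 h2
  rw [← h3, gz_inv_mul_self_mul]

lemma gz_source_mem_unitSpace {a : G} (ha : a ≠ 0) : a⁻¹ * a ∈ unitSpace G :=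
  ⟨gz_inv_mul_ne_zero ha, gz_source_idem ha⟩

lemma gz_unit_inv_mul {e : G} (he : e ∈ unitSpace G) : e⁻¹ * e = e := by
  obtain ⟨hne, hee⟩ := he
  have hcomm : e⁻¹ * e = e * e⁻¹ :=
    (mul_ne_zero_iff' e e hne hne).mp (by rw [hee]; exact hne)
  have h2 : e⁻¹ * e * e = e⁻¹ * e := by
    rw [mul_assoc' e⁻¹ e e (gz_inv_mul_ne_zero hne) (by rw [hee]; exact hne), hee]
  have h3 : e⁻¹ * e * e = e := by rw [hcomm]; exact mul_inv_self_mul' e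
  exact (h3.symm.trans h2).symm

lemma gz_unit_inv {e : G} (he : e ∈ unitSpace G) : e⁻¹ = e := by
  have h := gz_unit_inv_mul he
  have h2 := congrArg Inv.inv h
  rw [mul_inv_rev', inv_inv'] at h2
  exact h2.symm.trans h

lemma gz_unit_mul_inv {e : G} (he : e ∈ unitSpace G) : e * e⁻¹ = e := by
  rw [gz_unit_inv he]; exact he.2

end AuxGZ

section AuxTop

variable {G : Type*} [TopologicalSpace G] [AmpleGroupoid G]

instance (priority := 100) : T2Space G := AmpleGroupoid.t2'

lemma ag_isOpen_ne_zero : IsOpen {a : G | a ≠ 0} := by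
  have h : IsClosed ({(0 : G)} : Set G) := isClosed_singleton
  have : {a : G | a ≠ 0} = (({(0 : G)} : Set G))ᶜ := by
    ext x; simp
  rw [this]
  exact h.isOpen_compl

lemma ag_continuousOn_source :
    ContinuousOn (fun a : G => a⁻¹ * a) {a : G | a ≠ 0} := by
  have hc : Continuous (fun a : G => ((a⁻¹ : G), a)) :=
    (AmpleGroupoid.continuous_inv').prodMk continuous_id
  have hm := AmpleGroupoid.continuousOn_mul' (G := G)
  exact hm.comp hc.continuousOn (fun a ha => gz_inv_mul_ne_zero ha)

/-- Extending a compact open bisection by the identity off its source gives a full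
compact open bisection (in a groupoid where range = source everywhere). -/
lemma ag_fullExtend (hcomp : IsCompact (unitSpace G))
    (hIso : ∀ a : G, a * a⁻¹ = a⁻¹ * a) {C : Set G} (hC : IsCOB C) :
    (C ∪ (unitSpace G \ (fun a : G => a⁻¹ * a) '' C)) ∈ fullBisections G := by
  set E : Set G := (fun a : G => a⁻¹ * a) '' C with hE
  have hCne : ∀ x ∈ C, x ≠ (0 : G) := fun x hx h => hC.1.1 (h ▸ hx)
  have hEsub : E ⊆ unitSpace G := by
    rintro _ ⟨x, hx, rfl⟩; exact gz_source_mem_unitSpace (hCne x hx)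
  have hErange : (fun a : G => a * a⁻¹) '' C = E :=
    Set.image_congr (fun a _ => hIso a)
  have hEopen : IsOpen E := by
    rw [← hErange]
    exact AmpleGroupoid.isOpenMap_range' C hC.2.2 hC.1.1
  have hEcompact : IsCompact E :=
    hC.2.1.image_of_continuousOn (ag_continuousOn_source.mono hCne)
  have hEclosed : IsClosed E := hEcompact.isClosed
  have hUnits : ∀ x ∈ unitSpace G \ E, x * x⁻¹ = x ∧ x⁻¹ * x = x :=
    fun x hx => ⟨gz_unit_mul_inv hx.1, gz_unit_inv_mul hx.1⟩
  refine ⟨⟨⟨?_, ?_, ?_⟩, ?_, ?_⟩, ?_, ?_⟩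
  · rintro (h | h)
    · exact hC.1.1 h
    · exact h.1.1 rfl
  · intro x hx y hy hxy
    rcases hx with hx | hx <;> rcases hy with hy | hy
    · exact hC.1.2.1 x hx y hy hxy
    · exfalso; apply hy.2
      have : x * x⁻¹ ∈ E := by rw [hIso]; exact ⟨x, hx, rfl⟩
      rwa [hxy, (hUnits y hy).1] at this
    · exfalso; apply hx.2
      have : y * y⁻¹ ∈ E := by rw [hIso]; exact ⟨y, hy, rfl⟩
      rwa [← hxy, (hUnits x hx).1] at this
    · rw [← (hUnits x hx).1, ← (hUnits y hy).1]; exact hxy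
  · intro x hx y hy hxy
    rcases hx with hx | hx <;> rcases hy with hy | hy
    · exact hC.1.2.2 x hx y hy hxy
    · exfalso; apply hy.2
      have : x⁻¹ * x ∈ E := ⟨x, hx, rfl⟩
      rwa [hxy, (hUnits y hy).2] at this
    · exfalso; apply hx.2
      have : y⁻¹ * y ∈ E := ⟨y, hy, rfl⟩
      rwa [← hxy, (hUnits x hx).2] at this
    · rw [← (hUnits x hx).2, ← (hUnits y hy).2]; exact hxy
  · exact hC.2.1.union
      (hcomp.of_isClosed_subset (AmpleGroupoid.isClosed_unitSpace'.sdiff hEopen)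
        Set.diff_subset)
  · exact hC.2.2.union (AmpleGroupoid.isOpen_unitSpace'.sdiff hEclosed)
  · rw [Set.image_union, hErange,
      Set.image_congr (fun x hx => (hUnits x hx).1), Set.image_id']
    exact Set.union_diff_cancel hEsub
  · rw [Set.image_union, ← hE,
      Set.image_congr (fun x hx => (hUnits x hx).2), Set.image_id']
    exact Set.union_diff_cancel hEsub

end AuxTop

/-- If `G = Iso(G)` and `G` has two distinct units with nontrivial isotropy,
then the representation `π : ℂF(G) → A(G)`, `δ_U ↦ 1_U`, is not injective; equivalently,
the family of indicator functions of full compact open bisections is linearly dependent. -/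
theorem rep_not_injective_of_allIso {G : Type*} [TopologicalSpace G] [AmpleGroupoid G]
    (hcomp : IsCompact (unitSpace G))
    (hallIso : ∀ a : G, a * a⁻¹ = a⁻¹ * a)
    (htwo : ∃ u v : G, u ≠ v ∧
      (∃ a : G, a ≠ 0 ∧ a ≠ u ∧ a * a⁻¹ = u ∧ a⁻¹ * a = u) ∧
      (∃ b : G, b ≠ 0 ∧ b ≠ v ∧ b * b⁻¹ = v ∧ b⁻¹ * b = v)) :
    ¬ LinearIndependent ℂ
        (fun B : {B : Set G // B ∈ fullBisections G} => indic B.1) := by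
  classical
  intro hLI
  obtain ⟨u, v, huv, ⟨a, ha0, hau, hra, hsa⟩, ⟨b, hb0, hbv, hrb, hsb⟩⟩ := htwo
  obtain ⟨W1, W2, hW1, hW2, huW1, hvW2, hdisj⟩ := t2_separation huv
  have hopen1 : IsOpen ({x : G | x ≠ 0} ∩ (fun x : G => x⁻¹ * x) ⁻¹' W1) :=
    ag_continuousOn_source.isOpen_inter_preimage ag_isOpen_ne_zero hW1
  have hopen2 : IsOpen ({x : G | x ≠ 0} ∩ (fun x : G => x⁻¹ * x) ⁻¹' W2) :=
    ag_continuousOn_source.isOpen_inter_preimage ag_isOpen_ne_zero hW2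
  obtain ⟨A, hA, haA, hAsub⟩ := AmpleGroupoid.ample_basis' a _ ha0 hopen1
    ⟨ha0, by simp only [Set.mem_preimage, hsa]; exact huW1⟩
  obtain ⟨B, hB, hbB, hBsub⟩ := AmpleGroupoid.ample_basis' b _ hb0 hopen2
    ⟨hb0, by simp only [Set.mem_preimage, hsb]; exact hvW2⟩
  set E : Set G → Set G := fun C => (fun x : G => x⁻¹ * x) '' C with hEdef
  have hEA : E A ⊆ W1 := by rintro _ ⟨x, hx, rfl⟩; exact (hAsub hx).2
  have hEB : E B ⊆ W2 := by rintro _ ⟨x, hx, rfl⟩; exact (hBsub hx).2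
  have hdisjE : ∀ x : G, x ∈ E A → x ∈ E B → False :=
    fun x h1 h2 => (Set.disjoint_left.mp hdisj (hEA h1)) (hEB h2)
  -- A ∪ B is a compact open bisection
  have hABcob : IsCOB (A ∪ B) := by
    refine ⟨⟨?_, ?_, ?_⟩, hA.2.1.union hB.2.1, hA.2.2.union hB.2.2⟩
    · rintro (h | h)
      · exact hA.1.1 h
      · exact hB.1.1 h
    · intro x hx y hy hxy
      have hxy' : x⁻¹ * x = y⁻¹ * y := by rw [← hallIso, ← hallIso]; exact hxy
      rcases hx with hx | hx <;> rcases hy with hy | hy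
      · exact hA.1.2.1 x hx y hy hxy
      · exact (hdisjE _ ⟨x, hx, rfl⟩ ⟨y, hy, hxy'.symm⟩).elim
      · exact (hdisjE _ ⟨y, hy, rfl⟩ ⟨x, hx, hxy'⟩).elim
      · exact hB.1.2.1 x hx y hy hxy
    · intro x hx y hy hxy
      rcases hx with hx | hx <;> rcases hy with hy | hy
      · exact hA.1.2.2 x hx y hy hxy
      · exact (hdisjE _ ⟨x, hx, rfl⟩ ⟨y, hy, hxy.symm⟩).elim
      · exact (hdisjE _ ⟨y, hy, rfl⟩ ⟨x, hx, hxy⟩).elim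
      · exact hB.1.2.2 x hx y hy hxy
  have hemptyCOB : IsCOB (∅ : Set G) :=
    ⟨⟨Set.notMem_empty 0, fun x hx => absurd hx (Set.notMem_empty x),
      fun x hx => absurd hx (Set.notMem_empty x)⟩, isCompact_empty, isOpen_empty⟩
  set U : Set G → Set G := fun C => C ∪ (unitSpace G \ E C) with hUdef
  have hUmem : ∀ C : Set G, IsCOB C → U C ∈ fullBisections G :=
    fun C h => ag_fullExtend hcomp hallIso h
  have hU4 : U ∅ = unitSpace G := by
    simp [hUdef, hEdef]
  have hunitmem : unitSpace G ∈ fullBisections G := by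
    have := hUmem ∅ hemptyCOB; rwa [hU4] at this
  -- key non-memberships
  have haU : a ∉ unitSpace G := fun h => hau ((gz_unit_inv_mul h).symm.trans hsa)
  have hbU : b ∉ unitSpace G := fun h => hbv ((gz_unit_inv_mul h).symm.trans hsb)
  have haB : a ∉ B := fun h => hdisjE u ⟨a, haA, hsa⟩ ⟨a, h, hsa⟩
  have hbA : b ∉ A := fun h => hdisjE v ⟨b, h, hsb⟩ ⟨b, hbB, hsb⟩
  have haUA : a ∈ U A := Or.inl haA
  have haUAB : a ∈ U (A ∪ B) := Or.inl (Or.inl haA)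
  have haUB : a ∉ U B := by rintro (h | h); exacts [haB h, haU h.1]
  have hbUAB : b ∈ U (A ∪ B) := Or.inl (Or.inr hbB)
  have hbUA : b ∉ U A := by rintro (h | h); exacts [hbA h, hbU h.1]
  -- the four elements of the full group
  set b1 : {B : Set G // B ∈ fullBisections G} := ⟨U A, hUmem A hA⟩ with hb1
  set b2 : {B : Set G // B ∈ fullBisections G} := ⟨U B, hUmem B hB⟩ with hb2
  set b3 : {B : Set G // B ∈ fullBisections G} := ⟨U (A ∪ B), hUmem _ hABcob⟩ with hb3
  set b4 : {B : Set G // B ∈ fullBisections G} := ⟨unitSpace G, hunitmem⟩ with hb4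
  have hne12 : b2 ≠ b1 := by
    intro h
    have h' : U B = U A := congrArg Subtype.val h
    exact haUB (h'.symm ▸ haUA)
  have hne13 : b3 ≠ b1 := by
    intro h
    have h' : U (A ∪ B) = U A := congrArg Subtype.val h
    exact hbUA (h' ▸ hbUAB)
  have hne14 : b4 ≠ b1 := by
    intro h
    have h' : unitSpace G = U A := congrArg Subtype.val h
    exact haU (h'.symm ▸ haUA)
  -- the linear relation
  have hmem : ∀ (C : Set G) (x : G), indic C x = if x ∈ C then 1 else 0 := by
    intro C x; simp [indic, Set.indicator_apply]
  have hEAB : E (A ∪ B) = E A ∪ E B := Set.image_union _ _ _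
  have key : indic (U A) + indic (U B) = indic (U (A ∪ B)) + indic (unitSpace G) := by
    funext x
    simp only [Pi.add_apply, hmem]
    by_cases hxA : x ∈ A
    · have hxB : x ∉ B := fun h => hdisjE _ ⟨x, hxA, rfl⟩ ⟨x, h, rfl⟩
      have h1 : x ∈ U A := Or.inl hxA
      have h3 : x ∈ U (A ∪ B) := Or.inl (Or.inl hxA)
      by_cases hxu : x ∈ unitSpace G
      · have hxEB : x ∉ E B := fun h => hdisjE x ⟨x, hxA, gz_unit_inv_mul hxu⟩ h
        have h2 : x ∈ U B := Or.inr ⟨hxu, hxEB⟩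
        simp [h1, h2, h3, hxu]
      · have h2 : x ∉ U B := by rintro (h | h); exacts [hxB h, hxu h.1]
        simp [h1, h2, h3, hxu]
    · by_cases hxB : x ∈ B
      · have h2 : x ∈ U B := Or.inl hxB
        have h3 : x ∈ U (A ∪ B) := Or.inl (Or.inr hxB)
        by_cases hxu : x ∈ unitSpace G
        · have hxEA : x ∉ E A := fun h => hdisjE x h ⟨x, hxB, gz_unit_inv_mul hxu⟩
          have h1 : x ∈ U A := Or.inr ⟨hxu, hxEA⟩
          simp [h1, h2, h3, hxu]
        · have h1 : x ∉ U A := by rintro (h | h); exacts [hxA h, hxu h.1]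
          simp [h1, h2, h3, hxu]
      · by_cases hxu : x ∈ unitSpace G
        · by_cases hxEA : x ∈ E A
          · have hxEB : x ∉ E B := fun h => hdisjE x hxEA h
            have h1 : x ∉ U A := by
              rintro (h | h); exacts [hxA h, h.2 hxEA]
            have h2 : x ∈ U B := Or.inr ⟨hxu, hxEB⟩
            have h3 : x ∉ U (A ∪ B) := by
              rintro (h | h)
              · rcases h with h | h; exacts [hxA h, hxB h]
              · exact h.2 (hEAB ▸ (Or.inl hxEA))
            simp [h1, h2, h3, hxu]
          · by_cases hxEB : x ∈ E B
            · have h1 : x ∈ U A := Or.inr ⟨hxu, hxEA⟩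
              have h2 : x ∉ U B := by
                rintro (h | h); exacts [hxB h, h.2 hxEB]
              have h3 : x ∉ U (A ∪ B) := by
                rintro (h | h)
                · rcases h with h | h; exacts [hxA h, hxB h]
                · exact h.2 (hEAB ▸ (Or.inr hxEB))
              simp [h1, h2, h3, hxu]
            · have h1 : x ∈ U A := Or.inr ⟨hxu, hxEA⟩
              have h2 : x ∈ U B := Or.inr ⟨hxu, hxEB⟩
              have h3 : x ∈ U (A ∪ B) := Or.inr ⟨hxu, by
                rw [hEAB]; rintro (h | h); exacts [hxEA h, hxEB h]⟩
              simp [h1, h2, h3, hxu]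
        · have h1 : x ∉ U A := by rintro (h | h); exacts [hxA h, hxu h.1]
          have h2 : x ∉ U B := by rintro (h | h); exacts [hxB h, hxu h.1]
          have h3 : x ∉ U (A ∪ B) := by
            rintro (h | h)
            · rcases h with h | h; exacts [hxA h, hxB h]
            · exact hxu h.1
          simp [h1, h2, h3, hxu]
  -- build the dependent linear combination
  set f := fun B : {B : Set G // B ∈ fullBisections G} => indic B.1 with hf
  set l : {B : Set G // B ∈ fullBisections G} →₀ ℂ :=
    Finsupp.single b1 1 + Finsupp.single b2 1 - Finsupp.single b3 1 -
      Finsupp.single b4 1 with hl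
  have hl0 : Finsupp.linearCombination ℂ f l = 0 := by
    have : Finsupp.linearCombination ℂ f l
        = f b1 + f b2 - f b3 - f b4 := by
      simp [hl, map_add, map_sub, Finsupp.linearCombination_single]
    rw [this, sub_sub, sub_eq_zero]
    show indic (U A) + indic (U B) = indic (U (A ∪ B)) + indic (unitSpace G)
    exact key
  have hzero : l = 0 := linearIndependent_iff.mp hLI l hl0
  have hval : l b1 = 1 := by
    simp [hl, Finsupp.single_eq_of_ne' hne12, Finsupp.single_eq_of_ne' hne13,
      Finsupp.single_eq_of_ne' hne14]
  rw [hzero] at hval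
  simp at hval
end

section
/- Let G be an ample Hausdorff groupoid with compact unit space. The representation π: ℂF(G) → A(G), δ_U ↦ 1_U, is injective if and only if either (1) G = Iso(G) and G has at most one nontrivial isotropy group, or (2) G ≠ Iso(G) and |G \ G^{(0)}| < 3. -/
open scoped Classical

namespace RepAux

variable {G : Type*} [GroupoidZ G]

open GroupoidZ

lemma gz_zero_mul (a : G) : 0 * a = 0 := GroupoidZ.zero_mul' a
lemma gz_mul_zero (a : G) : a * 0 = 0 := GroupoidZ.mul_zero' a
lemma gz_inv_inv (a : G) : a⁻¹⁻¹ = a := GroupoidZ.inv_inv' a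

lemma inv_ne_zero' {a : G} (h : a ≠ 0) : a⁻¹ ≠ 0 := by
  intro h0
  apply h
  have := congrArg (fun x : G => x⁻¹) h0
  simpa [gz_inv_inv, GroupoidZ.inv_zero'] using this

lemma inv_injective' : Function.Injective (fun a : G => a⁻¹) := by
  intro a b h
  have := congrArg (fun x : G => x⁻¹) h
  simpa [gz_inv_inv] using this

lemma rng_ne_zero {a : G} (h : a ≠ 0) : a * a⁻¹ ≠ 0 := by
  intro h0
  apply h
  have h1 := GroupoidZ.mul_inv_self_mul' a
  rw [h0, gz_zero_mul] at h1
  exact h1.symm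

lemma src_ne_zero {a : G} (h : a ≠ 0) : a⁻¹ * a ≠ 0 := by
  have := rng_ne_zero (inv_ne_zero' h)
  rwa [gz_inv_inv] at this

lemma rng_mul_self (a : G) : (a * a⁻¹) * a = a := GroupoidZ.mul_inv_self_mul' a

lemma mul_src_self {a : G} (h : a ≠ 0) : a * (a⁻¹ * a) = a := by
  rw [← GroupoidZ.mul_assoc' a a⁻¹ a (rng_ne_zero h) (src_ne_zero h)]
  exact rng_mul_self a

lemma src_idem {a : G} (h : a ≠ 0) : (a⁻¹ * a) * (a⁻¹ * a) = a⁻¹ * a := by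
  have hbc : a * (a⁻¹ * a) ≠ 0 := by rw [mul_src_self h]; exact h
  have := GroupoidZ.mul_assoc' a⁻¹ a (a⁻¹ * a) (src_ne_zero h) hbc
  rw [this, mul_src_self h]

lemma src_mem_unit {a : G} (h : a ≠ 0) : a⁻¹ * a ∈ unitSpace G :=
  ⟨src_ne_zero h, src_idem h⟩

lemma rng_mem_unit {a : G} (h : a ≠ 0) : a * a⁻¹ ∈ unitSpace G := by
  have := src_mem_unit (inv_ne_zero' h)
  rwa [gz_inv_inv] at this

lemma comp_iff {a b : G} (ha : a ≠ 0) (hb : b ≠ 0) :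
    a * b ≠ 0 ↔ a⁻¹ * a = b * b⁻¹ := GroupoidZ.mul_ne_zero_iff' a b ha hb

lemma ne_zero_left {a b : G} (h : a * b ≠ 0) : a ≠ 0 := by
  rintro rfl; exact h (gz_zero_mul b)

lemma ne_zero_right {a b : G} (h : a * b ≠ 0) : b ≠ 0 := by
  rintro rfl; exact h (gz_mul_zero a)

lemma left_cancel {a b : G} (h : a * b ≠ 0) : a⁻¹ * (a * b) = b := by
  have ha := ne_zero_left h
  have hb := ne_zero_right h
  rw [← GroupoidZ.mul_assoc' a⁻¹ a b (src_ne_zero ha) h,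
    (comp_iff ha hb).mp h, rng_mul_self b]

lemma right_cancel {a b : G} (h : a * b ≠ 0) : (a * b) * b⁻¹ = a := by
  have ha := ne_zero_left h
  have hb := ne_zero_right h
  rw [GroupoidZ.mul_assoc' a b b⁻¹ h (rng_ne_zero hb),
    ← (comp_iff ha hb).mp h, mul_src_self ha]

lemma inv_comp_ne_zero {a b : G} (h : a * b ≠ 0) : b⁻¹ * a⁻¹ ≠ 0 := by
  have ha := ne_zero_left h
  have hb := ne_zero_right h
  rw [comp_iff (inv_ne_zero' hb) (inv_ne_zero' ha), gz_inv_inv, gz_inv_inv]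
  exact ((comp_iff ha hb).mp h).symm

lemma rng_of_mul {a b : G} (h : a * b ≠ 0) : (a * b) * (a * b)⁻¹ = a * a⁻¹ := by
  rw [GroupoidZ.mul_inv_rev',
    ← GroupoidZ.mul_assoc' (a * b) b⁻¹ a⁻¹ (by rw [right_cancel h]; exact ne_zero_left h)
      (inv_comp_ne_zero h),
    right_cancel h]

lemma src_of_mul {a b : G} (h : a * b ≠ 0) : (a * b)⁻¹ * (a * b) = b⁻¹ * b := by
  rw [GroupoidZ.mul_inv_rev',
    GroupoidZ.mul_assoc' b⁻¹ a⁻¹ (a * b) (inv_comp_ne_zero h)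
      (by rw [left_cancel h]; exact ne_zero_right h),
    left_cancel h]

lemma unit_ne_zero {e : G} (he : e ∈ unitSpace G) : e ≠ 0 := he.1

lemma unit_src {e : G} (he : e ∈ unitSpace G) : e⁻¹ * e = e := by
  have h : e * e ≠ 0 := by rw [he.2]; exact he.1
  have := left_cancel h
  rwa [he.2] at this

lemma unit_rng {e : G} (he : e ∈ unitSpace G) : e * e⁻¹ = e := by
  have h : e * e ≠ 0 := by rw [he.2]; exact he.1
  have := right_cancel h
  rwa [he.2] at this

lemma unit_inv {e : G} (he : e ∈ unitSpace G) : e⁻¹ = e := by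
  have h1 := GroupoidZ.mul_inv_self_mul' e⁻¹
  rw [gz_inv_inv] at h1
  rw [unit_src he, unit_rng he] at h1
  exact h1.symm

lemma unit_of_src_eq {a : G} (h : a ≠ 0) (hs : a⁻¹ * a = a) : a ∈ unitSpace G := by
  refine ⟨h, ?_⟩
  have := src_idem h
  rwa [hs] at this

lemma rng_idem {a : G} (h : a ≠ 0) : (a * a⁻¹) * (a * a⁻¹) = a * a⁻¹ := by
  have := src_idem (inv_ne_zero' h)
  rwa [gz_inv_inv] at this

lemma unit_of_rng_eq {a : G} (h : a ≠ 0) (hs : a * a⁻¹ = a) : a ∈ unitSpace G := by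
  refine ⟨h, ?_⟩
  have := rng_idem h
  rwa [hs] at this

lemma unit_eq_src {a : G} (h : a ≠ 0) (ha : a ∈ unitSpace G) : a⁻¹ * a = a := unit_src ha

/-- A nonzero element whose range and source differ is not a unit. -/
lemma nonunit_of_rs_ne {a : G} (h : a * a⁻¹ ≠ a⁻¹ * a) : a ∉ unitSpace G := by
  intro ha
  rw [unit_rng ha, unit_src ha] at h
  exact h rfl

/-- A nonzero isotropy element distinct from its base unit is not a unit. -/
lemma nonunit_of_iso {a u : G} (ha : a ≠ 0) (hs : a⁻¹ * a = u) (hneq : a ≠ u) :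
    a ∉ unitSpace G := by
  intro hu
  rw [unit_src hu] at hs
  exact hneq hs

/-- An element with both range and source nonzero is composable iff matching. -/
lemma comp_of_match {a b : G} (ha : a ≠ 0) (hb : b ≠ 0) (h : a⁻¹ * a = b * b⁻¹) :
    a * b ≠ 0 := (comp_iff ha hb).mpr h

lemma mul_right_unique {a c : G} (h : a * c = a) (hc : c ≠ 0) (ha : a ≠ 0) :
    c = a⁻¹ * a := by
  have hac : a * c ≠ 0 := by rw [h]; exact ha
  have := left_cancel hac
  rw [h] at this
  exact this.symm

lemma mul_left_unique {c a : G} (h : c * a = a) (hc : c ≠ 0) (ha : a ≠ 0) :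
    c = a * a⁻¹ := by
  have hac : c * a ≠ 0 := by rw [h]; exact ha
  have := right_cancel hac
  rw [h] at this
  exact this.symm

lemma unit_src_eq {e : G} (he : e ∈ unitSpace G) : e⁻¹ * e = e := unit_src he

section Topology

variable {G : Type*} [TopologicalSpace G] [AmpleGroupoid G]

instance : T2Space G := AmpleGroupoid.t2'

lemma isOpen_nz : IsOpen {a : G | a ≠ 0} := by
  have h : IsOpen (({0} : Set G)ᶜ) := isClosed_singleton.isOpen_compl
  have he : (({0} : Set G)ᶜ) = {a : G | a ≠ 0} := by ext a; simp
  rwa [he] at h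

lemma continuousOn_rng : ContinuousOn (fun a : G => a * a⁻¹) {a : G | a ≠ 0} := by
  have h1 : ContinuousOn (fun p : G × G => p.1 * p.2) {p : G × G | p.1 * p.2 ≠ 0} :=
    AmpleGroupoid.continuousOn_mul'
  have h2 : ContinuousOn (fun a : G => ((a, a⁻¹) : G × G)) {a : G | a ≠ 0} :=
    (continuous_id.prodMk AmpleGroupoid.continuous_inv').continuousOn
  exact h1.comp h2 (fun a ha => rng_ne_zero ha)

lemma continuousOn_src : ContinuousOn (fun a : G => a⁻¹ * a) {a : G | a ≠ 0} := by
  have h1 : ContinuousOn (fun p : G × G => p.1 * p.2) {p : G × G | p.1 * p.2 ≠ 0} :=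
    AmpleGroupoid.continuousOn_mul'
  have h2 : ContinuousOn (fun a : G => ((a⁻¹, a) : G × G)) {a : G | a ≠ 0} :=
    (AmpleGroupoid.continuous_inv'.prodMk continuous_id).continuousOn
  exact h1.comp h2 (fun a ha => src_ne_zero ha)

/-- Inversion as a homeomorphism. -/
def invHomeo : G ≃ₜ G where
  toFun := fun a => a⁻¹
  invFun := fun a => a⁻¹
  left_inv := gz_inv_inv
  right_inv := gz_inv_inv
  continuous_toFun := AmpleGroupoid.continuous_inv'
  continuous_invFun := AmpleGroupoid.continuous_inv'

lemma mem_setInv {B : Set G} {a : G} : a ∈ setInv B ↔ a⁻¹ ∈ B := by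
  constructor
  · rintro ⟨b, hb, rfl⟩; rwa [gz_inv_inv]
  · intro h; exact ⟨a⁻¹, h, gz_inv_inv a⟩

lemma isOpen_setInv {B : Set G} (h : IsOpen B) : IsOpen (setInv B) :=
  (invHomeo.isOpen_image).mpr h

lemma isCompact_setInv {B : Set G} (h : IsCompact B) : IsCompact (setInv B) :=
  h.image AmpleGroupoid.continuous_inv'

lemma isBisection_setInv {B : Set G} (h : IsBisection B) : IsBisection (setInv B) := by
  obtain ⟨h0, hr, hs⟩ := h
  refine ⟨fun hm => ?_, ?_, ?_⟩
  · rw [mem_setInv, GroupoidZ.inv_zero'] at hm; exact h0 hm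
  · rintro x ⟨b, hb, rfl⟩ y ⟨c, hc, rfl⟩ hxy
    rw [gz_inv_inv, gz_inv_inv] at hxy
    rw [hs b hb c hc hxy]
  · rintro x ⟨b, hb, rfl⟩ y ⟨c, hc, rfl⟩ hxy
    rw [gz_inv_inv, gz_inv_inv] at hxy
    rw [hr b hb c hc hxy]

lemma isCOB_setInv {B : Set G} (h : IsCOB B) : IsCOB (setInv B) :=
  ⟨isBisection_setInv h.1, isCompact_setInv h.2.1, isOpen_setInv h.2.2⟩

/-- The range image of a subset. -/
def rngIm (B : Set G) : Set G := (fun a => a * a⁻¹) '' B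
/-- The source image of a subset. -/
def srcIm (B : Set G) : Set G := (fun a => a⁻¹ * a) '' B

lemma mem_rngIm_of_mem {B : Set G} {a : G} (h : a ∈ B) : a * a⁻¹ ∈ rngIm B :=
  Set.mem_image_of_mem _ h

lemma mem_srcIm_of_mem {B : Set G} {a : G} (h : a ∈ B) : a⁻¹ * a ∈ srcIm B :=
  Set.mem_image_of_mem _ h

lemma rngIm_setInv (B : Set G) : rngIm (setInv B) = srcIm B := by
  unfold rngIm srcIm setInv
  rw [Set.image_image]
  apply Set.image_congr
  intro a _
  rw [gz_inv_inv]

lemma srcIm_setInv (B : Set G) : srcIm (setInv B) = rngIm B := by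
  unfold rngIm srcIm setInv
  rw [Set.image_image]
  apply Set.image_congr
  intro a _
  rw [gz_inv_inv]

lemma subset_nz_of_nzero {B : Set G} (h : (0:G) ∉ B) : B ⊆ {a : G | a ≠ 0} := by
  intro a ha
  rintro rfl
  exact h ha

lemma isOpen_rngIm {B : Set G} (ho : IsOpen B) (h0 : (0:G) ∉ B) : IsOpen (rngIm B) :=
  AmpleGroupoid.isOpenMap_range' B ho h0

lemma isOpen_srcIm {B : Set G} (ho : IsOpen B) (h0 : (0:G) ∉ B) : IsOpen (srcIm B) := by
  rw [← rngIm_setInv]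
  refine isOpen_rngIm (isOpen_setInv ho) ?_
  rw [mem_setInv, GroupoidZ.inv_zero']
  exact h0

lemma isCompact_rngIm {B : Set G} (hc : IsCompact B) (h0 : (0:G) ∉ B) :
    IsCompact (rngIm B) :=
  hc.image_of_continuousOn (continuousOn_rng.mono (subset_nz_of_nzero h0))

lemma isCompact_srcIm {B : Set G} (hc : IsCompact B) (h0 : (0:G) ∉ B) :
    IsCompact (srcIm B) :=
  hc.image_of_continuousOn (continuousOn_src.mono (subset_nz_of_nzero h0))

lemma rngIm_subset_unit {B : Set G} (h0 : (0:G) ∉ B) : rngIm B ⊆ unitSpace G := by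
  rintro x ⟨b, hb, rfl⟩
  exact rng_mem_unit (fun hb0 => h0 (hb0 ▸ hb))

lemma srcIm_subset_unit {B : Set G} (h0 : (0:G) ∉ B) : srcIm B ⊆ unitSpace G := by
  rintro x ⟨b, hb, rfl⟩
  exact src_mem_unit (fun hb0 => h0 (hb0 ▸ hb))

lemma rngIm_of_units {S : Set G} (h : S ⊆ unitSpace G) : rngIm S = S := by
  unfold rngIm
  apply Set.Subset.antisymm
  · rintro x ⟨b, hb, rfl⟩
    show b * b⁻¹ ∈ S
    rw [unit_rng (h hb)]; exact hb
  · intro x hx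
    exact ⟨x, hx, unit_rng (h hx)⟩

lemma srcIm_of_units {S : Set G} (h : S ⊆ unitSpace G) : srcIm S = S := by
  unfold srcIm
  apply Set.Subset.antisymm
  · rintro x ⟨b, hb, rfl⟩
    show b⁻¹ * b ∈ S
    rw [unit_src (h hb)]; exact hb
  · intro x hx
    exact ⟨x, hx, unit_src (h hx)⟩

/-- Clopen source preimage of a compact open set. -/
def srcPre (K : Set G) : Set G := {a : G | a ≠ 0 ∧ a⁻¹ * a ∈ K}

lemma isOpen_srcPre {K : Set G} (hK : IsOpen K) : IsOpen (srcPre K) := by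
  have h := ContinuousOn.isOpen_inter_preimage (continuousOn_src (G := G)) isOpen_nz hK
  have he : {a : G | a ≠ 0} ∩ (fun a : G => a⁻¹ * a) ⁻¹' K = srcPre K := by
    ext a; simp [srcPre]
  rwa [he] at h

lemma isClosed_srcPre {K : Set G} (hK : IsClosed K) : IsClosed (srcPre K) := by
  rw [← isOpen_compl_iff]
  have h1 := ContinuousOn.isOpen_inter_preimage (continuousOn_src (G := G)) isOpen_nz
    hK.isOpen_compl
  have h2 : IsOpen ({(0:G)} ∪ ({a : G | a ≠ 0} ∩ (fun a : G => a⁻¹ * a) ⁻¹' Kᶜ)) :=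
    (AmpleGroupoid.isolated_zero').union h1
  have he : ({(0:G)} ∪ ({a : G | a ≠ 0} ∩ (fun a : G => a⁻¹ * a) ⁻¹' Kᶜ)) = (srcPre K)ᶜ := by
    ext a
    by_cases h0 : a = 0 <;> simp [srcPre, h0]
  rwa [he] at h2

lemma mem_srcPre {K : Set G} {a : G} : a ∈ srcPre K ↔ a ≠ 0 ∧ a⁻¹ * a ∈ K := Iff.rfl

lemma isBisection_mono {A B : Set G} (h : A ⊆ B) (hB : IsBisection B) : IsBisection A :=
  ⟨fun h0 => hB.1 (h h0), fun a ha b hb => hB.2.1 a (h ha) b (h hb),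
    fun a ha b hb => hB.2.2 a (h ha) b (h hb)⟩

lemma restrict_src {A K : Set G} (hA : IsCOB A) (hKc : IsCompact K) (hKo : IsOpen K) :
    IsCOB (A ∩ srcPre K) ∧ srcIm (A ∩ srcPre K) = srcIm A ∩ K := by
  constructor
  · refine ⟨isBisection_mono Set.inter_subset_left hA.1, ?_, hA.2.2.inter (isOpen_srcPre hKo)⟩
    exact hA.2.1.inter_right (isClosed_srcPre hKc.isClosed)
  · apply Set.Subset.antisymm
    · rintro x ⟨b, ⟨hbA, hb0, hbK⟩, rfl⟩
      exact ⟨mem_srcIm_of_mem hbA, hbK⟩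
    · rintro x ⟨⟨b, hbA, rfl⟩, hbK⟩
      refine ⟨b, ⟨hbA, ?_, hbK⟩, rfl⟩
      rintro rfl
      exact hA.1.1 hbA

lemma isCOB_singleton_of_src_isolated {δ : G} (hδ : δ ≠ 0)
    (ho : IsOpen ({δ⁻¹ * δ} : Set G)) : IsCOB ({δ} : Set G) := by
  obtain ⟨A, hACOB, hmem, hsub⟩ := AmpleGroupoid.ample_basis' δ {a : G | a ≠ 0} hδ isOpen_nz hδ
  have hres := restrict_src (K := {δ⁻¹ * δ}) hACOB isCompact_singleton ho
  have heq : A ∩ srcPre {δ⁻¹ * δ} = {δ} := by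
    apply Set.Subset.antisymm
    · rintro x ⟨hxA, hx0, hxK⟩
      simp only [Set.mem_singleton_iff] at hxK ⊢
      exact hACOB.1.2.2 x hxA δ hmem hxK
    · rintro x rfl
      exact ⟨hmem, hδ, rfl⟩
  rw [heq] at hres
  exact hres.1

lemma isOpen_rng_singleton {δ : G} (hδ : δ ≠ 0) (h : IsOpen ({δ} : Set G)) :
    IsOpen ({δ * δ⁻¹} : Set G) := by
  have h2 := isOpen_rngIm h (by simp [hδ.symm])
  have : rngIm ({δ} : Set G) = {δ * δ⁻¹} := by
    unfold rngIm; rw [Set.image_singleton]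
  rwa [this] at h2

lemma isOpen_src_singleton {δ : G} (hδ : δ ≠ 0) (h : IsOpen ({δ} : Set G)) :
    IsOpen ({δ⁻¹ * δ} : Set G) := by
  have h2 := isOpen_srcIm h (by simp [hδ.symm])
  have : srcIm ({δ} : Set G) = {δ⁻¹ * δ} := by
    unfold srcIm; rw [Set.image_singleton]
  rwa [this] at h2

lemma isOpen_inv_singleton {δ : G} (h : IsOpen ({δ} : Set G)) :
    IsOpen ({δ⁻¹} : Set G) := by
  have h2 := isOpen_setInv h
  have : setInv ({δ} : Set G) = {δ⁻¹} := by
    unfold setInv; rw [Set.image_singleton]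
  rwa [this] at h2

lemma unitSpace_mem_full (hcomp : IsCompact (unitSpace G)) :
    unitSpace G ∈ fullBisections G := by
  refine ⟨⟨⟨fun h0 => h0.1 rfl, ?_, ?_⟩, hcomp, AmpleGroupoid.isOpen_unitSpace'⟩, ?_, ?_⟩
  · intro a ha b hb h
    rw [unit_rng ha, unit_rng hb] at h; exact h
  · intro a ha b hb h
    rw [unit_src ha, unit_src hb] at h; exact h
  · exact rngIm_of_units (le_refl _)
  · exact srcIm_of_units (le_refl _)

lemma exists_unit_nbhd {u : G} (hu : u ∈ unitSpace G) {O : Set G} (hO : IsOpen O)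
    (hmem : u ∈ O) : ∃ K : Set G, IsCompact K ∧ IsOpen K ∧ u ∈ K ∧ K ⊆ O ∧
      K ⊆ unitSpace G := by
  obtain ⟨B, hBCOB, hBmem, hBsub⟩ := AmpleGroupoid.ample_basis' u (O ∩ unitSpace G) hu.1
    (hO.inter AmpleGroupoid.isOpen_unitSpace') ⟨hmem, hu⟩
  exact ⟨B, hBCOB.2.1, hBCOB.2.2, hBmem, fun x hx => (hBsub hx).1, fun x hx => (hBsub hx).2⟩

end Topology
section Builders

variable {G : Type*} [TopologicalSpace G] [AmpleGroupoid G]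

lemma isBisection_union {A B : Set G} (hA : IsBisection A) (hB : IsBisection B)
    (hr : rngIm A ∩ rngIm B = ∅) (hs : srcIm A ∩ srcIm B = ∅) :
    IsBisection (A ∪ B) := by
  refine ⟨fun h0 => h0.elim hA.1 hB.1, ?_, ?_⟩
  · rintro a (ha | ha) b (hb | hb) h
    · exact hA.2.1 a ha b hb h
    · exact absurd (Set.mem_inter (mem_rngIm_of_mem ha) (h ▸ mem_rngIm_of_mem hb))
        (by rw [hr]; exact Set.notMem_empty _)
    · exact absurd (Set.mem_inter (h ▸ mem_rngIm_of_mem hb) (mem_rngIm_of_mem ha))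
        (by rw [hr]; exact Set.notMem_empty _)
    · exact hB.2.1 a ha b hb h
  · rintro a (ha | ha) b (hb | hb) h
    · exact hA.2.2 a ha b hb h
    · exact absurd (Set.mem_inter (mem_srcIm_of_mem ha) (h ▸ mem_srcIm_of_mem hb))
        (by rw [hs]; exact Set.notMem_empty _)
    · exact absurd (Set.mem_inter (h ▸ mem_srcIm_of_mem hb) (mem_srcIm_of_mem ha))
        (by rw [hs]; exact Set.notMem_empty _)
    · exact hB.2.2 a ha b hb h

/-- A "modification": a compact open bisection whose source and range images agree. -/
structure IsMod (M : Set G) : Prop where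
  cob : IsCOB M
  eq : srcIm M = rngIm M

lemma rngIm_union (A B : Set G) : rngIm (A ∪ B) = rngIm A ∪ rngIm B :=
  Set.image_union _ _ _

lemma srcIm_union (A B : Set G) : srcIm (A ∪ B) = srcIm A ∪ srcIm B :=
  Set.image_union _ _ _

lemma isMod_union {M₁ M₂ : Set G} (h₁ : IsMod M₁) (h₂ : IsMod M₂)
    (hdis : rngIm M₁ ∩ rngIm M₂ = ∅) : IsMod (M₁ ∪ M₂) := by
  have hs : srcIm M₁ ∩ srcIm M₂ = ∅ := by rw [h₁.eq, h₂.eq]; exact hdis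
  refine ⟨⟨isBisection_union h₁.cob.1 h₂.cob.1 hdis hs, h₁.cob.2.1.union h₂.cob.2.1,
    h₁.cob.2.2.union h₂.cob.2.2⟩, ?_⟩
  rw [rngIm_union, srcIm_union, h₁.eq, h₂.eq]

lemma isMod_swap {P : Set G} (hP : IsCOB P) (hdisj : srcIm P ∩ rngIm P = ∅) :
    IsMod (P ∪ setInv P) := by
  have h1 : rngIm P ∩ rngIm (setInv P) = ∅ := by
    rw [rngIm_setInv]
    rw [Set.inter_comm]; exact hdisj
  have h2 : srcIm P ∩ srcIm (setInv P) = ∅ := by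
    rw [srcIm_setInv]; exact hdisj
  refine ⟨⟨isBisection_union hP.1 (isCOB_setInv hP).1 h1 h2,
    hP.2.1.union (isCompact_setInv hP.2.1), hP.2.2.union (isOpen_setInv hP.2.2)⟩, ?_⟩
  rw [rngIm_union, srcIm_union, rngIm_setInv, srcIm_setInv, Set.union_comm]

/-- The full bisection obtained by replacing part of the unit space with a modification. -/
def modB (M : Set G) : Set G := (unitSpace G \ rngIm M) ∪ M

lemma modB_mem_full {M : Set G} (hM : IsMod M) (hcomp : IsCompact (unitSpace G)) :
    modB M ∈ fullBisections G := by
  have h0 : (0:G) ∉ M := hM.cob.1.1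
  have hFo : IsOpen (rngIm M) := isOpen_rngIm hM.cob.2.2 h0
  have hFc : IsCompact (rngIm M) := isCompact_rngIm hM.cob.2.1 h0
  have hFu : rngIm M ⊆ unitSpace G := rngIm_subset_unit h0
  have hXdiff_units : unitSpace G \ rngIm M ⊆ unitSpace G := Set.diff_subset
  have hbis : IsBisection (modB M) := by
    refine ⟨?_, ?_, ?_⟩
    · rintro (⟨h1, _⟩ | h1)
      · exact h1.1 rfl
      · exact h0 h1
    · rintro a (ha | ha) b (hb | hb) h
      · rw [unit_rng ha.1, unit_rng hb.1] at h; exact h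
      · exfalso; rw [unit_rng ha.1] at h
        exact ha.2 (h ▸ mem_rngIm_of_mem hb)
      · exfalso; rw [unit_rng hb.1] at h
        exact hb.2 (h.symm ▸ mem_rngIm_of_mem ha)
      · exact hM.cob.1.2.1 a ha b hb h
    · rintro a (ha | ha) b (hb | hb) h
      · rw [unit_src ha.1, unit_src hb.1] at h; exact h
      · exfalso; rw [unit_src ha.1] at h
        have hmem : a ∈ srcIm M := h ▸ mem_srcIm_of_mem hb
        rw [hM.eq] at hmem
        exact ha.2 hmem
      · exfalso; rw [unit_src hb.1] at h
        have hmem : b ∈ srcIm M := h.symm ▸ mem_srcIm_of_mem ha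
        rw [hM.eq] at hmem
        exact hb.2 hmem
      · exact hM.cob.1.2.2 a ha b hb h
  refine ⟨⟨hbis, ?_, ?_⟩, ?_, ?_⟩
  · exact (hcomp.inter_right hFo.isClosed_compl).union hM.cob.2.1
  · exact (AmpleGroupoid.isOpen_unitSpace'.sdiff hFc.isClosed).union hM.cob.2.2
  · show rngIm (modB M) = unitSpace G
    rw [modB, rngIm_union, rngIm_of_units hXdiff_units]
    rw [Set.diff_union_self]
    exact Set.union_eq_self_of_subset_right hFu
  · show srcIm (modB M) = unitSpace G
    rw [modB, srcIm_union, srcIm_of_units hXdiff_units, hM.eq]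
    rw [Set.diff_union_self]
    exact Set.union_eq_self_of_subset_right hFu

end Builders
section LinAlg

variable {G : Type*} [TopologicalSpace G] [AmpleGroupoid G]

lemma indic_apply (B : Set G) (x : G) : indic B x = if x ∈ B then 1 else 0 := by
  simp [indic, Set.indicator_apply]

lemma sum_indic_eval {l : {B : Set G // B ∈ fullBisections G} →₀ ℂ}
    (hl : Finsupp.linearCombination ℂ
      (fun B : {B : Set G // B ∈ fullBisections G} => indic B.1) l = 0) (x : G) :
    ∑ C ∈ l.support, l C * indic C.1 x = 0 := by
  rw [Finsupp.linearCombination_apply] at hl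
  have h := congrFun hl x
  rw [Finsupp.sum, Finset.sum_apply] at h
  simpa using h

lemma li_of_sep
    (hsep : ∀ s : Finset {B : Set G // B ∈ fullBisections G},
      ∀ B ∈ s, ∃ x : G, x ∈ B.1 ∧ ∀ C ∈ s, C ≠ B → x ∉ C.1) :
    LinearIndependent ℂ
      (fun B : {B : Set G // B ∈ fullBisections G} => indic B.1) := by
  rw [linearIndependent_iff]
  intro l hl
  ext B
  simp only [Finsupp.coe_zero, Pi.zero_apply]
  by_cases hB : B ∈ l.support
  case neg => exact Finsupp.notMem_support_iff.mp hB
  obtain ⟨x, hxB, hx⟩ := hsep l.support B hB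
  have h := sum_indic_eval hl x
  rw [Finset.sum_eq_single B] at h
  · rw [indic_apply, if_pos hxB, mul_one] at h
    exact h
  · intro C hC hCB
    rw [indic_apply, if_neg (hx C hC hCB), mul_zero]
  · intro hB'; exact absurd hB hB'

lemma not_li_four {B₁ B₂ B₃ B₄ : Set G}
    (h₁ : B₁ ∈ fullBisections G) (h₂ : B₂ ∈ fullBisections G)
    (h₃ : B₃ ∈ fullBisections G) (h₄ : B₄ ∈ fullBisections G)
    (hne₂ : B₁ ≠ B₂) (hne₃ : B₁ ≠ B₃) (hne₄ : B₁ ≠ B₄)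
    (hrel : indic B₁ + indic B₄ = indic B₂ + indic B₃) :
    ¬ LinearIndependent ℂ
      (fun B : {B : Set G // B ∈ fullBisections G} => indic B.1) := by
  intro hli
  rw [linearIndependent_iff] at hli
  set b₁ : {B : Set G // B ∈ fullBisections G} := ⟨B₁, h₁⟩ with hb₁
  set b₂ : {B : Set G // B ∈ fullBisections G} := ⟨B₂, h₂⟩ with hb₂
  set b₃ : {B : Set G // B ∈ fullBisections G} := ⟨B₃, h₃⟩ with hb₃
  set b₄ : {B : Set G // B ∈ fullBisections G} := ⟨B₄, h₄⟩ with hb₄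
  set l : {B : Set G // B ∈ fullBisections G} →₀ ℂ :=
    Finsupp.single b₁ 1 + Finsupp.single b₄ 1 - Finsupp.single b₂ 1 -
      Finsupp.single b₃ 1 with hldef
  have hl0 : Finsupp.linearCombination ℂ
      (fun B : {B : Set G // B ∈ fullBisections G} => indic B.1) l = 0 := by
    rw [hldef, map_sub, map_sub, map_add]
    simp only [Finsupp.linearCombination_single, one_smul]
    rw [sub_sub, sub_eq_zero]
    exact hrel
  have hz := hli l hl0
  have h1 : l b₁ = 1 := by
    rw [hldef]
    simp only [Finsupp.coe_sub, Finsupp.coe_add, Pi.sub_apply, Pi.add_apply,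
      Finsupp.single_apply]
    rw [if_neg (fun h => hne₄ (congrArg Subtype.val h).symm),
      if_neg (fun h => hne₂ (congrArg Subtype.val h).symm),
      if_neg (fun h => hne₃ (congrArg Subtype.val h).symm)]
    norm_num
  rw [hz] at h1
  simp at h1

lemma not_li_six {B₁ B₂ B₃ C₁ C₂ C₃ : Set G}
    (h₁ : B₁ ∈ fullBisections G) (h₂ : B₂ ∈ fullBisections G)
    (h₃ : B₃ ∈ fullBisections G) (k₁ : C₁ ∈ fullBisections G)
    (k₂ : C₂ ∈ fullBisections G) (k₃ : C₃ ∈ fullBisections G)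
    (hne₂ : B₁ ≠ B₂) (hne₃ : B₁ ≠ B₃)
    (hne₄ : B₁ ≠ C₁) (hne₅ : B₁ ≠ C₂) (hne₆ : B₁ ≠ C₃)
    (hrel : indic B₁ + indic B₂ + indic B₃ = indic C₁ + indic C₂ + indic C₃) :
    ¬ LinearIndependent ℂ
      (fun B : {B : Set G // B ∈ fullBisections G} => indic B.1) := by
  intro hli
  rw [linearIndependent_iff] at hli
  set b₁ : {B : Set G // B ∈ fullBisections G} := ⟨B₁, h₁⟩ with hb₁
  set b₂ : {B : Set G // B ∈ fullBisections G} := ⟨B₂, h₂⟩ with hb₂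
  set b₃ : {B : Set G // B ∈ fullBisections G} := ⟨B₃, h₃⟩ with hb₃
  set c₁ : {B : Set G // B ∈ fullBisections G} := ⟨C₁, k₁⟩ with hc₁
  set c₂ : {B : Set G // B ∈ fullBisections G} := ⟨C₂, k₂⟩ with hc₂
  set c₃ : {B : Set G // B ∈ fullBisections G} := ⟨C₃, k₃⟩ with hc₃
  set l : {B : Set G // B ∈ fullBisections G} →₀ ℂ :=
    Finsupp.single b₁ 1 + Finsupp.single b₂ 1 + Finsupp.single b₃ 1 -
      Finsupp.single c₁ 1 - Finsupp.single c₂ 1 - Finsupp.single c₃ 1 with hldef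
  have hl0 : Finsupp.linearCombination ℂ
      (fun B : {B : Set G // B ∈ fullBisections G} => indic B.1) l = 0 := by
    rw [hldef, map_sub, map_sub, map_sub, map_add, map_add]
    simp only [Finsupp.linearCombination_single, one_smul]
    rw [sub_sub, sub_sub, sub_eq_zero, hrel]
    abel
  have hz := hli l hl0
  have h1 : l b₁ = 1 := by
    rw [hldef]
    simp only [Finsupp.coe_sub, Finsupp.coe_add, Pi.sub_apply, Pi.add_apply,
      Finsupp.single_apply]
    rw [if_neg (fun h => hne₂ (congrArg Subtype.val h).symm),
      if_neg (fun h => hne₃ (congrArg Subtype.val h).symm),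
      if_neg (fun h => hne₄ (congrArg Subtype.val h).symm),
      if_neg (fun h => hne₅ (congrArg Subtype.val h).symm),
      if_neg (fun h => hne₆ (congrArg Subtype.val h).symm)]
    norm_num
  rw [hz] at h1
  simp at h1

lemma indic_add_indic_eq {S T S' T' : Set G} (hi : S ∩ T = S' ∩ T')
    (hu : S ∪ T = S' ∪ T') : indic S + indic T = indic S' + indic T' := by
  funext x
  have h1 := Set.ext_iff.mp hi x
  have h2 := Set.ext_iff.mp hu x
  simp only [Set.mem_inter_iff, Set.mem_union] at h1 h2
  simp only [Pi.add_apply, indic_apply]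
  by_cases hS : x ∈ S <;> by_cases hT : x ∈ T <;> by_cases hS' : x ∈ S' <;>
    by_cases hT' : x ∈ T' <;> simp [hS, hT, hS', hT'] at h1 h2 ⊢ <;> tauto

end LinAlg
section Patterns

variable {G : Type*} [TopologicalSpace G] [AmpleGroupoid G]

lemma mem_modB {M : Set G} {x : G} :
    x ∈ modB M ↔ (x ∈ unitSpace G ∧ x ∉ rngIm M) ∨ x ∈ M := by
  simp [modB, Set.mem_union, Set.mem_diff]

lemma unit_mem_rngIm {M : Set G} {x : G} (hx : x ∈ M) (hu : x ∈ unitSpace G) :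
    x ∈ rngIm M := by
  have := mem_rngIm_of_mem hx
  rwa [unit_rng hu] at this

lemma unit_mem_srcIm {M : Set G} {x : G} (hx : x ∈ M) (hu : x ∈ unitSpace G) :
    x ∈ srcIm M := by
  have := mem_srcIm_of_mem hx
  rwa [unit_src hu] at this

lemma square_dep {M₁ M₂ : Set G} (hcomp : IsCompact (unitSpace G))
    (h₁ : IsMod M₁) (h₂ : IsMod M₂)
    (hdis : rngIm M₁ ∩ rngIm M₂ = ∅)
    (hm₁ : ∃ m ∈ M₁, m ∉ unitSpace G) (hm₂ : ∃ m ∈ M₂, m ∉ unitSpace G) :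
    ¬ LinearIndependent ℂ
      (fun B : {B : Set G // B ∈ fullBisections G} => indic B.1) := by
  obtain ⟨m₁, hm₁M, hm₁u⟩ := hm₁
  obtain ⟨m₂, hm₂M, hm₂u⟩ := hm₂
  have hM12 : IsMod (M₁ ∪ M₂) := isMod_union h₁ h₂ hdis
  have hdisF : ∀ x : G, x ∈ rngIm M₁ → x ∈ rngIm M₂ → False := by
    intro x hx1 hx2
    have : x ∈ rngIm M₁ ∩ rngIm M₂ := ⟨hx1, hx2⟩
    rw [hdis] at this
    exact this
  have hrel : indic (unitSpace G) + indic (modB (M₁ ∪ M₂)) =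
      indic (modB M₁) + indic (modB M₂) := by
    apply indic_add_indic_eq
    · -- intersections
      ext x
      simp only [Set.mem_inter_iff, mem_modB, rngIm_union, Set.mem_union]
      constructor
      · rintro ⟨hxu, (⟨-, hxF⟩ | (hx1 | hx2))⟩
        · push_neg at hxF
          exact ⟨Or.inl ⟨hxu, hxF.1⟩, Or.inl ⟨hxu, hxF.2⟩⟩
        · refine ⟨Or.inr hx1, Or.inl ⟨hxu, fun hc => ?_⟩⟩
          exact hdisF x (unit_mem_rngIm hx1 hxu) hc
        · refine ⟨Or.inl ⟨hxu, fun hc => ?_⟩, Or.inr hx2⟩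
          exact hdisF x hc (unit_mem_rngIm hx2 hxu)
      · rintro ⟨(⟨hxu, hxF1⟩ | hx1), (⟨hxu2, hxF2⟩ | hx2)⟩
        · exact ⟨hxu, Or.inl ⟨hxu, fun hc => hc.elim hxF1 hxF2⟩⟩
        · exact ⟨hxu, Or.inr (Or.inr hx2)⟩
        · exact ⟨hxu2, Or.inr (Or.inl hx1)⟩
        · exact absurd (mem_rngIm_of_mem hx1) (fun hc => hdisF _ hc (mem_rngIm_of_mem hx2))
    · -- unions
      ext x
      simp only [Set.mem_union, mem_modB, rngIm_union, Set.mem_union]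
      constructor
      · rintro (hxu | (⟨hxu, hxF⟩ | (hx1 | hx2)))
        · by_cases hF1 : x ∈ rngIm M₁
          · exact Or.inr (Or.inl ⟨hxu, fun hc => hdisF x hF1 hc⟩)
          · exact Or.inl (Or.inl ⟨hxu, hF1⟩)
        · exact Or.inl (Or.inl ⟨hxu, fun hc => hxF (Or.inl hc)⟩)
        · exact Or.inl (Or.inr hx1)
        · exact Or.inr (Or.inr hx2)
      · rintro ((⟨hxu, -⟩ | hx1) | (⟨hxu, -⟩ | hx2))
        · exact Or.inl hxu
        · exact Or.inr (Or.inr (Or.inl hx1))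
        · exact Or.inl hxu
        · exact Or.inr (Or.inr (Or.inr hx2))
  have hXmem := unitSpace_mem_full (G := G) hcomp
  have hB1 := modB_mem_full h₁ hcomp
  have hB2 := modB_mem_full h₂ hcomp
  have hB12 := modB_mem_full hM12 hcomp
  have key : ∀ (M : Set G) (m : G), m ∈ M → m ∉ unitSpace G → unitSpace G ≠ modB M := by
    intro M m hmem hmu heq
    have : m ∈ unitSpace G := by
      rw [heq]
      exact mem_modB.mpr (Or.inr hmem)
    exact hmu this
  exact not_li_four hXmem hB1 hB2 hB12
    (key M₁ m₁ hm₁M hm₁u) (key M₂ m₂ hm₂M hm₂u)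
    (key (M₁ ∪ M₂) m₁ (Or.inl hm₁M) hm₁u) hrel

end Patterns
section Parallel

variable {G : Type*} [TopologicalSpace G] [AmpleGroupoid G]

lemma mem_ne_zero {P : Set G} {x : G} (h0 : (0:G) ∉ P) (hx : x ∈ P) : x ≠ 0 := by
  rintro rfl; exact h0 hx

lemma parallel_dep {P₁ P₂ : Set G} (hcomp : IsCompact (unitSpace G))
    (h₁ : IsCOB P₁) (h₂ : IsCOB P₂)
    (hss : srcIm P₂ = srcIm P₁) (hrr : rngIm P₂ = rngIm P₁)
    (hsr : srcIm P₁ ∩ rngIm P₁ = ∅)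
    (hdisj : P₁ ∩ P₂ = ∅) (hwit : ∃ p, p ∈ P₁) :
    ¬ LinearIndependent ℂ
      (fun B : {B : Set G // B ∈ fullBisections G} => indic B.1) := by
  obtain ⟨p, hp⟩ := hwit
  set F : Set G := rngIm P₁ ∪ srcIm P₁ with hFdef
  have hsrF : ∀ x : G, x ∈ srcIm P₁ → x ∈ rngIm P₁ → False := by
    intro x hx1 hx2
    have : x ∈ srcIm P₁ ∩ rngIm P₁ := ⟨hx1, hx2⟩
    rw [hsr] at this; exact this
  have hPP : ∀ x : G, x ∈ P₁ → x ∈ P₂ → False := by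
    intro x hx1 hx2
    have : x ∈ P₁ ∩ P₂ := ⟨hx1, hx2⟩
    rw [hdisj] at this; exact this
  -- non-unit facts
  have hnu1 : ∀ x ∈ P₁, x ∉ unitSpace G := fun x hx hu =>
    hsrF x (unit_mem_srcIm hx hu) (unit_mem_rngIm hx hu)
  have hnu2 : ∀ x ∈ P₂, x ∉ unitSpace G := fun x hx hu =>
    hsrF x (hss ▸ unit_mem_srcIm hx hu) (hrr ▸ unit_mem_rngIm hx hu)
  have hnuInv : ∀ (Q : Set G), (∀ x ∈ Q, x ∉ unitSpace G) →
      ∀ x ∈ setInv Q, x ∉ unitSpace G := by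
    intro Q hQ x hx hu
    have hxQ : x⁻¹ ∈ Q := mem_setInv.mp hx
    have : x⁻¹ = x := unit_inv hu
    rw [this] at hxQ
    exact hQ x hxQ hu
  -- the four modifications
  have mkmod : ∀ A B : Set G, IsCOB A → IsCOB B →
      srcIm A = srcIm P₁ → rngIm A = rngIm P₁ →
      srcIm B = srcIm P₁ → rngIm B = rngIm P₁ →
      IsMod (A ∪ setInv B) ∧ rngIm (A ∪ setInv B) = F := by
    intro A B hA hB hsA hrA hsB hrB
    have hrngU : rngIm (A ∪ setInv B) = F := by
      rw [rngIm_union, rngIm_setInv, hrA, hsB]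
    refine ⟨⟨⟨isBisection_union hA.1 (isCOB_setInv hB).1 ?_ ?_,
      hA.2.1.union (isCompact_setInv hB.2.1), hA.2.2.union (isOpen_setInv hB.2.2)⟩, ?_⟩,
      hrngU⟩
    · rw [rngIm_setInv, hrA, hsB, Set.inter_comm]; exact hsr
    · rw [srcIm_setInv, hsA, hrB]; exact hsr
    · rw [hrngU, srcIm_union, srcIm_setInv, hsA, hrB, hFdef, Set.union_comm]
  obtain ⟨hmod11, hr11⟩ := mkmod P₁ P₁ h₁ h₁ rfl rfl rfl rfl
  obtain ⟨hmod22, hr22⟩ := mkmod P₂ P₂ h₂ h₂ hss hrr hss hrr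
  obtain ⟨hmod12, hr12⟩ := mkmod P₁ P₂ h₁ h₂ rfl rfl hss hrr
  obtain ⟨hmod21, hr21⟩ := mkmod P₂ P₁ h₂ h₁ hss hrr rfl rfl
  -- cross-emptiness facts
  have hcross : ∀ A D : Set G, srcIm A = srcIm P₁ → rngIm D = rngIm P₁ →
      ∀ x : G, x ∈ A → x ∈ setInv D → False := by
    intro A D hsA hrD x hxA hxD
    have h1 : x⁻¹ * x ∈ srcIm A := mem_srcIm_of_mem hxA
    have h2 : x⁻¹ * x ∈ srcIm (setInv D) := mem_srcIm_of_mem hxD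
    rw [srcIm_setInv, hrD] at h2
    rw [hsA] at h1
    exact hsrF _ h1 h2
  have hinvPP : ∀ x : G, x ∈ setInv P₁ → x ∈ setInv P₂ → False := by
    intro x hx1 hx2
    exact hPP x⁻¹ (mem_setInv.mp hx1) (mem_setInv.mp hx2)
  -- intersections of the four modification sets
  have hM1122 : (P₁ ∪ setInv P₁) ∩ (P₂ ∪ setInv P₂) = ∅ := by
    ext x
    simp only [Set.mem_inter_iff, Set.mem_union, Set.mem_empty_iff_false, iff_false]
    rintro ⟨(h1 | h1), (h2 | h2)⟩
    · exact hPP x h1 h2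
    · exact hcross P₁ P₂ rfl hrr x h1 h2
    · exact hcross P₂ P₁ hss rfl x h2 h1
    · exact hinvPP x h1 h2
  have hM1221 : (P₁ ∪ setInv P₂) ∩ (P₂ ∪ setInv P₁) = ∅ := by
    ext x
    simp only [Set.mem_inter_iff, Set.mem_union, Set.mem_empty_iff_false, iff_false]
    rintro ⟨(h1 | h1), (h2 | h2)⟩
    · exact hPP x h1 h2
    · exact hcross P₁ P₁ rfl rfl x h1 h2
    · exact hcross P₂ P₂ hss hrr x h2 h1
    · exact hinvPP x h2 h1
  -- nonunit facts for the mods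
  have hnuM : ∀ A B : Set G, (∀ x ∈ A, x ∉ unitSpace G) → (∀ x ∈ B, x ∉ unitSpace G) →
      ∀ x ∈ A ∪ setInv B, x ∉ unitSpace G := by
    rintro A B hA hB x (hx | hx)
    · exact hA x hx
    · exact hnuInv B hB x hx
  have hModInter : ∀ M M' : Set G, rngIm M = F → rngIm M' = F →
      (∀ x ∈ M, x ∉ unitSpace G) → (∀ x ∈ M', x ∉ unitSpace G) → M ∩ M' = ∅ →
      modB M ∩ modB M' = unitSpace G \ F := by
    intro M M' hF hF' hnu hnu' hMM
    ext x
    simp only [Set.mem_inter_iff, mem_modB, hF, hF', Set.mem_diff]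
    constructor
    · rintro ⟨(⟨hxu, hxF⟩ | hxM), (⟨hxu', hxF'⟩ | hxM')⟩
      · exact ⟨hxu, hxF⟩
      · exact absurd hxu (hnu' _ hxM')
      · exact absurd hxu' (hnu _ hxM)
      · exact absurd (Set.mem_inter hxM hxM')
          (by rw [hMM]; exact Set.notMem_empty x)
    · rintro ⟨hxu, hxF⟩
      exact ⟨Or.inl ⟨hxu, hxF⟩, Or.inl ⟨hxu, hxF⟩⟩
  -- the indicator relation
  have hrel : indic (modB (P₁ ∪ setInv P₁)) + indic (modB (P₂ ∪ setInv P₂)) =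
      indic (modB (P₁ ∪ setInv P₂)) + indic (modB (P₂ ∪ setInv P₁)) := by
    apply indic_add_indic_eq
    · rw [hModInter _ _ hr11 hr22 (hnuM P₁ P₁ hnu1 hnu1) (hnuM P₂ P₂ hnu2 hnu2) hM1122,
        hModInter _ _ hr12 hr21 (hnuM P₁ P₂ hnu1 hnu2) (hnuM P₂ P₁ hnu2 hnu1) hM1221]
    · ext x
      simp only [Set.mem_union, mem_modB, hr11, hr22, hr12, hr21, Set.mem_union]
      constructor
      · rintro ((h | (h | h)) | (h | (h | h)))
        · exact Or.inl (Or.inl h)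
        · exact Or.inl (Or.inr (Or.inl h))
        · exact Or.inr (Or.inr (Or.inr h))
        · exact Or.inl (Or.inl h)
        · exact Or.inr (Or.inr (Or.inl h))
        · exact Or.inl (Or.inr (Or.inr h))
      · rintro ((h | (h | h)) | (h | (h | h)))
        · exact Or.inl (Or.inl h)
        · exact Or.inl (Or.inr (Or.inl h))
        · exact Or.inr (Or.inr (Or.inr h))
        · exact Or.inl (Or.inl h)
        · exact Or.inr (Or.inr (Or.inl h))
        · exact Or.inl (Or.inr (Or.inr h))
  -- distinctness via the witnesses p and p⁻¹
  have hp0 : p ≠ 0 := mem_ne_zero h₁.1.1 hp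
  have hpsrc : p⁻¹ * p ∈ srcIm P₁ := mem_srcIm_of_mem hp
  have hpinv : p⁻¹ ∈ setInv P₁ := ⟨p, hp, rfl⟩
  have hpnu : p ∉ unitSpace G := hnu1 p hp
  have hpinvnu : p⁻¹ ∉ unitSpace G := hnuInv P₁ hnu1 p⁻¹ hpinv
  have hne22 : modB (P₁ ∪ setInv P₁) ≠ modB (P₂ ∪ setInv P₂) := by
    intro heq
    have hmem : p ∈ modB (P₂ ∪ setInv P₂) := heq ▸ mem_modB.mpr (Or.inr (Or.inl hp))
    rcases mem_modB.mp hmem with ⟨hu, -⟩ | (h | h)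
    · exact hpnu hu
    · exact hPP p hp h
    · exact hcross P₁ P₂ rfl hrr p hp h
  have hne12 : modB (P₁ ∪ setInv P₁) ≠ modB (P₁ ∪ setInv P₂) := by
    intro heq
    have hmem : p⁻¹ ∈ modB (P₁ ∪ setInv P₂) :=
      heq ▸ mem_modB.mpr (Or.inr (Or.inr hpinv))
    rcases mem_modB.mp hmem with ⟨hu, -⟩ | (h | h)
    · exact hpinvnu hu
    · exact hcross P₁ P₁ rfl rfl p⁻¹ h hpinv
    · exact hPP p hp (by have := mem_setInv.mp h; rwa [gz_inv_inv] at this)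
  have hne21 : modB (P₁ ∪ setInv P₁) ≠ modB (P₂ ∪ setInv P₁) := by
    intro heq
    have hmem : p ∈ modB (P₂ ∪ setInv P₁) := heq ▸ mem_modB.mpr (Or.inr (Or.inl hp))
    rcases mem_modB.mp hmem with ⟨hu, -⟩ | (h | h)
    · exact hpnu hu
    · exact hPP p hp h
    · exact hcross P₁ P₁ rfl rfl p hp h
  exact not_li_four (modB_mem_full hmod11 hcomp) (modB_mem_full hmod12 hcomp)
    (modB_mem_full hmod21 hcomp) (modB_mem_full hmod22 hcomp)
    hne12 hne21 hne22 hrel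

end Parallel
section Triangle

variable {G : Type*} [TopologicalSpace G] [AmpleGroupoid G]

lemma ne_of_src_ne {a b : G} (h : a⁻¹ * a ≠ b⁻¹ * b) : a ≠ b := by
  rintro rfl; exact h rfl

lemma indic_union_disjoint {S T : Set G} (h : S ∩ T = ∅) :
    indic (S ∪ T) = indic S + indic T := by
  funext t
  have ht := Set.ext_iff.mp h t
  simp only [Set.mem_inter_iff, Set.mem_empty_iff_false, iff_false] at ht
  simp only [Pi.add_apply, indic_apply, Set.mem_union]
  by_cases hS : t ∈ S <;> by_cases hT : t ∈ T <;> simp [hS, hT] <;>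
    exact absurd ⟨hS, hT⟩ ht

lemma indic_modB {M : Set G} (hM : IsMod M) :
    indic (modB M) = indic (unitSpace G \ rngIm M) + indic M := by
  apply indic_union_disjoint
  ext t
  simp only [Set.mem_inter_iff, Set.mem_diff, Set.mem_empty_iff_false, iff_false]
  rintro ⟨⟨htu, htF⟩, htM⟩
  exact htF (unit_mem_rngIm htM htu)

lemma indic_triple {a b c : G} (hab : a ≠ b) (hac : a ≠ c) (hbc : b ≠ c) :
    indic ({a, b, c} : Set G) = indic {a} + (indic {b} + indic {c}) := by
  have e1 : ({b} : Set G) ∩ {c} = ∅ := by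
    ext t
    simp only [Set.mem_inter_iff, Set.mem_singleton_iff, Set.mem_empty_iff_false, iff_false]
    rintro ⟨rfl, rfl⟩; exact hbc rfl
  have e2 : ({a} : Set G) ∩ ({b} ∪ {c}) = ∅ := by
    ext t
    simp only [Set.mem_inter_iff, Set.mem_union, Set.mem_singleton_iff,
      Set.mem_empty_iff_false, iff_false]
    rintro ⟨rfl, rfl | rfl⟩
    · exact hab rfl
    · exact hac rfl
  have h2 : ({a, b, c} : Set G) = {a} ∪ ({b} ∪ {c}) := by ext t; simp; tauto
  rw [h2, indic_union_disjoint e2, indic_union_disjoint e1]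

lemma srcIm_triple (a b c : G) :
    srcIm ({a, b, c} : Set G) = {a⁻¹ * a, b⁻¹ * b, c⁻¹ * c} := by
  unfold srcIm
  rw [Set.image_insert_eq, Set.image_insert_eq, Set.image_singleton]

lemma rngIm_triple (a b c : G) :
    rngIm ({a, b, c} : Set G) = {a * a⁻¹, b * b⁻¹, c * c⁻¹} := by
  unfold rngIm
  rw [Set.image_insert_eq, Set.image_insert_eq, Set.image_singleton]

lemma isCOB_triple {g₁ g₂ g₃ : G} (h₁ : g₁ ≠ 0) (h₂ : g₂ ≠ 0) (h₃ : g₃ ≠ 0)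
    (ho₁ : IsOpen ({g₁} : Set G)) (ho₂ : IsOpen ({g₂} : Set G))
    (ho₃ : IsOpen ({g₃} : Set G))
    (hs₁₂ : g₁⁻¹ * g₁ ≠ g₂⁻¹ * g₂) (hs₁₃ : g₁⁻¹ * g₁ ≠ g₃⁻¹ * g₃)
    (hs₂₃ : g₂⁻¹ * g₂ ≠ g₃⁻¹ * g₃)
    (hr₁₂ : g₁ * g₁⁻¹ ≠ g₂ * g₂⁻¹) (hr₁₃ : g₁ * g₁⁻¹ ≠ g₃ * g₃⁻¹)
    (hr₂₃ : g₂ * g₂⁻¹ ≠ g₃ * g₃⁻¹) :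
    IsCOB ({g₁, g₂, g₃} : Set G) := by
  refine ⟨⟨?_, ?_, ?_⟩, ?_, ?_⟩
  · rintro (h | h | h)
    · exact h₁ h.symm
    · exact h₂ h.symm
    · exact h₃ h.symm
  · intro a ha b hb h
    simp only [Set.mem_insert_iff, Set.mem_singleton_iff] at ha hb
    rcases ha with rfl | rfl | rfl <;> rcases hb with rfl | rfl | rfl <;>
      first
        | rfl
        | exact absurd h hr₁₂
        | exact absurd h.symm hr₁₂
        | exact absurd h hr₁₃
        | exact absurd h.symm hr₁₃
        | exact absurd h hr₂₃
        | exact absurd h.symm hr₂₃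
  · intro a ha b hb h
    simp only [Set.mem_insert_iff, Set.mem_singleton_iff] at ha hb
    rcases ha with rfl | rfl | rfl <;> rcases hb with rfl | rfl | rfl <;>
      first
        | rfl
        | exact absurd h hs₁₂
        | exact absurd h.symm hs₁₂
        | exact absurd h hs₁₃
        | exact absurd h.symm hs₁₃
        | exact absurd h hs₂₃
        | exact absurd h.symm hs₂₃
  · exact (Set.finite_singleton g₃ |>.insert g₂ |>.insert g₁).isCompact
  · rw [Set.insert_eq, Set.insert_eq]
    exact ho₁.union (ho₂.union ho₃)

set_option maxHeartbeats 1000000 in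
lemma triangle_dep {x y z u v q : G} (hcomp : IsCompact (unitSpace G))
    (hu : u ∈ unitSpace G) (hv : v ∈ unitSpace G) (hq : q ∈ unitSpace G)
    (huv : u ≠ v) (huq : u ≠ q) (hvq : v ≠ q)
    (hou : IsOpen ({u} : Set G)) (hov : IsOpen ({v} : Set G))
    (hoq : IsOpen ({q} : Set G))
    (hx0 : x ≠ 0) (hxs : x⁻¹ * x = u) (hxr : x * x⁻¹ = v)
    (hy0 : y ≠ 0) (hys : y⁻¹ * y = u) (hyr : y * y⁻¹ = q)
    (hz0 : z ≠ 0) (hzs : z⁻¹ * z = v) (hzr : z * z⁻¹ = q)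
    (hox : IsOpen ({x} : Set G)) (hoy : IsOpen ({y} : Set G))
    (hoz : IsOpen ({z} : Set G)) :
    ¬ LinearIndependent ℂ
      (fun B : {B : Set G // B ∈ fullBisections G} => indic B.1) := by
  have hxi0 : x⁻¹ ≠ 0 := inv_ne_zero' hx0
  have hyi0 : y⁻¹ ≠ 0 := inv_ne_zero' hy0
  have hzi0 : z⁻¹ ≠ 0 := inv_ne_zero' hz0
  have hoxi : IsOpen ({x⁻¹} : Set G) := isOpen_inv_singleton hox
  have hoyi : IsOpen ({y⁻¹} : Set G) := isOpen_inv_singleton hoy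
  have hozi : IsOpen ({z⁻¹} : Set G) := isOpen_inv_singleton hoz
  have hu0 : u ≠ 0 := hu.1
  have hv0 : v ≠ 0 := hv.1
  have hq0 : q ≠ 0 := hq.1
  have hxis : x⁻¹⁻¹ * x⁻¹ = v := by rw [gz_inv_inv]; exact hxr
  have hxir : x⁻¹ * x⁻¹⁻¹ = u := by rw [gz_inv_inv]; exact hxs
  have hyis : y⁻¹⁻¹ * y⁻¹ = q := by rw [gz_inv_inv]; exact hyr
  have hyir : y⁻¹ * y⁻¹⁻¹ = u := by rw [gz_inv_inv]; exact hys
  have hzis : z⁻¹⁻¹ * z⁻¹ = q := by rw [gz_inv_inv]; exact hzr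
  have hzir : z⁻¹ * z⁻¹⁻¹ = v := by rw [gz_inv_inv]; exact hzs
  have hus : u⁻¹ * u = u := unit_src hu
  have hur : u * u⁻¹ = u := unit_rng hu
  have hvs : v⁻¹ * v = v := unit_src hv
  have hvr : v * v⁻¹ = v := unit_rng hv
  have hqs : q⁻¹ * q = q := unit_src hq
  have hqr : q * q⁻¹ = q := unit_rng hq
  have hF : ∀ M : Set G, srcIm M = ({u, v, q} : Set G) →
      rngIm M = ({u, v, q} : Set G) → IsCOB M → IsMod M := by
    intro M hs hr hc
    exact ⟨hc, by rw [hs, hr]⟩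
  have mod_id : IsMod ({u, v, q} : Set G) := by
    refine hF _ ?_ ?_ (isCOB_triple hu0 hv0 hq0 hou hov hoq ?_ ?_ ?_ ?_ ?_ ?_) <;>
      simp only [srcIm_triple, rngIm_triple, hus, hur, hvs, hvr, hqs, hqr] <;>
      first
        | assumption
        | (apply Ne.symm; assumption)
        | (ext t; simp; tauto)
  have mod_uv : IsMod ({x, x⁻¹, q} : Set G) := by
    refine hF _ ?_ ?_ (isCOB_triple hx0 hxi0 hq0 hox hoxi hoq ?_ ?_ ?_ ?_ ?_ ?_) <;>
      simp only [srcIm_triple, rngIm_triple, hxs, hxr, hxis, hxir, hqs, hqr] <;>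
      first
        | assumption
        | (apply Ne.symm; assumption)
        | (ext t; simp; tauto)
  have mod_uq : IsMod ({y, y⁻¹, v} : Set G) := by
    refine hF _ ?_ ?_ (isCOB_triple hy0 hyi0 hv0 hoy hoyi hov ?_ ?_ ?_ ?_ ?_ ?_) <;>
      simp only [srcIm_triple, rngIm_triple, hys, hyr, hyis, hyir, hvs, hvr] <;>
      first
        | assumption
        | (apply Ne.symm; assumption)
        | (ext t; simp; tauto)
  have mod_vq : IsMod ({z, z⁻¹, u} : Set G) := by
    refine hF _ ?_ ?_ (isCOB_triple hz0 hzi0 hu0 hoz hozi hou ?_ ?_ ?_ ?_ ?_ ?_) <;>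
      simp only [srcIm_triple, rngIm_triple, hzs, hzr, hzis, hzir, hus, hur] <;>
      first
        | assumption
        | (apply Ne.symm; assumption)
        | (ext t; simp; tauto)
  have mod_rho : IsMod ({x, z, y⁻¹} : Set G) := by
    refine hF _ ?_ ?_ (isCOB_triple hx0 hz0 hyi0 hox hoz hoyi ?_ ?_ ?_ ?_ ?_ ?_) <;>
      simp only [srcIm_triple, rngIm_triple, hxs, hxr, hzs, hzr, hyis, hyir] <;>
      first
        | assumption
        | (apply Ne.symm; assumption)
        | (ext t; simp; tauto)
  have mod_rho' : IsMod ({x⁻¹, z⁻¹, y} : Set G) := by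
    refine hF _ ?_ ?_ (isCOB_triple hxi0 hzi0 hy0 hoxi hozi hoy ?_ ?_ ?_ ?_ ?_ ?_) <;>
      simp only [srcIm_triple, rngIm_triple, hxis, hxir, hzis, hzir, hys, hyr] <;>
      first
        | assumption
        | (apply Ne.symm; assumption)
        | (ext t; simp; tauto)
  -- range images
  have hr_id : rngIm ({u, v, q} : Set G) = ({u, v, q} : Set G) := by
    rw [rngIm_triple, hur, hvr, hqr]
  have hr_uv : rngIm ({x, x⁻¹, q} : Set G) = ({u, v, q} : Set G) := by
    rw [rngIm_triple, hxr, hxir, hqr]; try (ext t; simp; tauto)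
  have hr_uq : rngIm ({y, y⁻¹, v} : Set G) = ({u, v, q} : Set G) := by
    rw [rngIm_triple, hyr, hyir, hvr]; try (ext t; simp; tauto)
  have hr_vq : rngIm ({z, z⁻¹, u} : Set G) = ({u, v, q} : Set G) := by
    rw [rngIm_triple, hzr, hzir, hur]; try (ext t; simp; tauto)
  have hr_rho : rngIm ({x, z, y⁻¹} : Set G) = ({u, v, q} : Set G) := by
    rw [rngIm_triple, hxr, hzr, hyir]; try (ext t; simp; tauto)
  have hr_rho' : rngIm ({x⁻¹, z⁻¹, y} : Set G) = ({u, v, q} : Set G) := by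
    rw [rngIm_triple, hxir, hzir, hyr]; try (ext t; simp; tauto)
  -- the relation
  have hrel : indic (modB ({u, v, q} : Set G)) + indic (modB ({x, z, y⁻¹} : Set G)) +
      indic (modB ({x⁻¹, z⁻¹, y} : Set G)) =
      indic (modB ({x, x⁻¹, q} : Set G)) + indic (modB ({y, y⁻¹, v} : Set G)) +
      indic (modB ({z, z⁻¹, u} : Set G)) := by
    rw [indic_modB mod_id, indic_modB mod_rho, indic_modB mod_rho', indic_modB mod_uv,
      indic_modB mod_uq, indic_modB mod_vq, hr_id, hr_uv, hr_uq, hr_vq, hr_rho, hr_rho']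
    rw [indic_triple huv huq hvq,
      indic_triple (ne_of_src_ne (by rw [hxs, hzs]; exact huv))
        (ne_of_src_ne (by rw [hxs, hyis]; exact huq))
        (ne_of_src_ne (by rw [hzs, hyis]; exact hvq)),
      indic_triple (ne_of_src_ne (by rw [hxis, hzis]; exact hvq))
        (ne_of_src_ne (by rw [hxis, hys]; exact huv.symm))
        (ne_of_src_ne (by rw [hzis, hys]; exact huq.symm)),
      indic_triple (ne_of_src_ne (by rw [hxs, hxis]; exact huv))
        (ne_of_src_ne (by rw [hxs, hqs]; exact huq))
        (ne_of_src_ne (by rw [hxis, hqs]; exact hvq)),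
      indic_triple (ne_of_src_ne (by rw [hys, hyis]; exact huq))
        (ne_of_src_ne (by rw [hys, hvs]; exact huv))
        (ne_of_src_ne (by rw [hyis, hvs]; exact hvq.symm)),
      indic_triple (ne_of_src_ne (by rw [hzs, hzis]; exact hvq))
        (ne_of_src_ne (by rw [hzs, hus]; exact huv.symm))
        (ne_of_src_ne (by rw [hzis, hus]; exact huq.symm))]
    abel
  -- distinctness of the identity bisection from the others
  have hxnu : x ∉ unitSpace G := nonunit_of_rs_ne (by rw [hxr, hxs]; exact huv.symm)
  have hynu : y ∉ unitSpace G := nonunit_of_rs_ne (by rw [hyr, hys]; exact huq.symm)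
  have hznu : z ∉ unitSpace G := nonunit_of_rs_ne (by rw [hzr, hzs]; exact hvq.symm)
  have hkey : ∀ (M : Set G) (w : G), w ∈ M → w ∉ unitSpace G →
      modB ({u, v, q} : Set G) ≠ modB M := by
    intro M w hwM hwu heq
    have hmem : w ∈ modB ({u, v, q} : Set G) := by
      rw [heq]; exact mem_modB.mpr (Or.inr hwM)
    rcases mem_modB.mp hmem with ⟨hw, -⟩ | hw
    · exact hwu hw
    · rcases hw with rfl | rfl | rfl
      · exact hwu hu
      · exact hwu hv
      · exact hwu hq
  exact not_li_six (modB_mem_full mod_id hcomp) (modB_mem_full mod_rho hcomp)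
    (modB_mem_full mod_rho' hcomp) (modB_mem_full mod_uv hcomp)
    (modB_mem_full mod_uq hcomp) (modB_mem_full mod_vq hcomp)
    (hkey _ x (by simp) hxnu) (hkey _ y (by simp) hynu)
    (hkey _ x (by simp) hxnu) (hkey _ y (by simp) hynu) (hkey _ z (by simp) hznu)
    hrel

end Triangle
section Dichotomy

variable {G : Type*} [TopologicalSpace G] [AmpleGroupoid G]

lemma srcIm_singleton (a : G) : srcIm ({a} : Set G) = {a⁻¹ * a} := by
  unfold srcIm; rw [Set.image_singleton]

lemma rngIm_singleton (a : G) : rngIm ({a} : Set G) = {a * a⁻¹} := by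
  unfold rngIm; rw [Set.image_singleton]

lemma singleton_inter_empty {x y : G} (h : x ≠ y) : ({x} : Set G) ∩ {y} = ∅ := by
  ext t
  simp only [Set.mem_inter_iff, Set.mem_singleton_iff, Set.mem_empty_iff_false, iff_false]
  rintro ⟨rfl, rfl⟩
  exact h rfl

lemma isCOB_of_isOpen_singleton {δ : G} (hδ : δ ≠ 0) (h : IsOpen ({δ} : Set G)) :
    IsCOB ({δ} : Set G) := by
  refine ⟨⟨?_, ?_, ?_⟩, isCompact_singleton, h⟩
  · intro h0; rw [Set.mem_singleton_iff] at h0; exact hδ h0.symm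
  · rintro a rfl b rfl _; rfl
  · rintro a rfl b rfl _; rfl

/-- Either we can split a compact open bisection around an arrow into two parts and get a
linear dependence, or the arrow is an isolated point. -/
lemma arrow_dichotomy (hcomp : IsCompact (unitSpace G)) {a : G} (ha0 : a ≠ 0)
    (hrs : a * a⁻¹ ≠ a⁻¹ * a) :
    (¬ LinearIndependent ℂ
      (fun B : {B : Set G // B ∈ fullBisections G} => indic B.1)) ∨
    IsOpen ({a} : Set G) := by
  obtain ⟨Ov, Ou, hOvo, hOuo, hvO, huO, hOdisj⟩ := t2_separation hrs
  have hanu : a ∉ unitSpace G := nonunit_of_rs_ne hrs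
  set Ω : Set G := ({x : G | x ≠ 0} ∩ (unitSpace G)ᶜ ∩ srcPre Ou) ∩
    {x : G | x ≠ 0 ∧ x * x⁻¹ ∈ Ov} with hΩdef
  have hrngpre : IsOpen {x : G | x ≠ 0 ∧ x * x⁻¹ ∈ Ov} := by
    have h := ContinuousOn.isOpen_inter_preimage (continuousOn_rng (G := G)) isOpen_nz hOvo
    have he : {x : G | x ≠ 0} ∩ (fun x : G => x * x⁻¹) ⁻¹' Ov =
        {x : G | x ≠ 0 ∧ x * x⁻¹ ∈ Ov} := by ext t; simp
    rwa [he] at h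
  have hΩo : IsOpen Ω :=
    (((isOpen_nz.inter AmpleGroupoid.isClosed_unitSpace'.isOpen_compl).inter
      (isOpen_srcPre hOuo))).inter hrngpre
  have haΩ : a ∈ Ω := ⟨⟨⟨ha0, hanu⟩, ha0, huO⟩, ha0, hvO⟩
  obtain ⟨A, hACOB, haA, hAsub⟩ := AmpleGroupoid.ample_basis' a Ω ha0 hΩo haΩ
  by_cases hA1 : A ⊆ {a}
  · right
    have heq : A = {a} := Set.Subset.antisymm hA1 (by rintro t rfl; exact haA)
    rw [← heq]
    exact hACOB.2.2
  left
  rw [Set.not_subset] at hA1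
  obtain ⟨b, hbA, hba⟩ := hA1
  rw [Set.mem_singleton_iff] at hba
  have hb0 : b ≠ 0 := (hAsub hbA).1.1.1
  have hsne : b⁻¹ * b ≠ a⁻¹ * a := fun h => hba (hACOB.1.2.2 b hbA a haA h)
  obtain ⟨Q1, Q2, hQ1o, hQ2o, hbQ, haQ, hQdisj⟩ := t2_separation hsne
  obtain ⟨U1, hU1c, hU1o, haU1, hU1sub, hU1X⟩ :=
    exists_unit_nbhd (src_mem_unit ha0) hQ2o haQ
  obtain ⟨U2, hU2c, hU2o, hbU2, hU2sub, hU2X⟩ :=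
    exists_unit_nbhd (src_mem_unit hb0) hQ1o hbQ
  set P₁ : Set G := A ∩ srcPre U1 with hP₁def
  set P₂ : Set G := A ∩ srcPre U2 with hP₂def
  obtain ⟨hP₁cob, hP₁src⟩ := restrict_src hACOB hU1c hU1o
  obtain ⟨hP₂cob, hP₂src⟩ := restrict_src hACOB hU2c hU2o
  have haP₁ : a ∈ P₁ := ⟨haA, ha0, haU1⟩
  have hbP₂ : b ∈ P₂ := ⟨hbA, hb0, hbU2⟩
  -- source and range inclusions
  have hsrcΩ : ∀ x : G, x ∈ A → x⁻¹ * x ∈ Ou := fun x hx => (hAsub hx).1.2.2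
  have hrngΩ : ∀ x : G, x ∈ A → x * x⁻¹ ∈ Ov := fun x hx => (hAsub hx).2.2
  have hsrc1 : srcIm P₁ ⊆ U1 := by rw [hP₁src]; exact Set.inter_subset_right
  have hsrc2 : srcIm P₂ ⊆ U2 := by rw [hP₂src]; exact Set.inter_subset_right
  have hsrcOu : ∀ (P : Set G), P ⊆ A → srcIm P ⊆ Ou := by
    rintro P hPA x ⟨p, hp, rfl⟩; exact hsrcΩ p (hPA hp)
  have hrngOv : ∀ (P : Set G), P ⊆ A → rngIm P ⊆ Ov := by
    rintro P hPA x ⟨p, hp, rfl⟩; exact hrngΩ p (hPA hp)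
  have hP₁A : P₁ ⊆ A := Set.inter_subset_left
  have hP₂A : P₂ ⊆ A := Set.inter_subset_left
  have hOuOv : ∀ x : G, x ∈ Ou → x ∈ Ov → False := by
    intro x h1 h2
    exact Set.disjoint_left.mp hOdisj h2 h1
  have hsr1 : srcIm P₁ ∩ rngIm P₁ = ∅ := by
    ext t
    simp only [Set.mem_inter_iff, Set.mem_empty_iff_false, iff_false]
    rintro ⟨h1, h2⟩
    exact hOuOv t (hsrcOu P₁ hP₁A h1) (hrngOv P₁ hP₁A h2)
  have hsr2 : srcIm P₂ ∩ rngIm P₂ = ∅ := by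
    ext t
    simp only [Set.mem_inter_iff, Set.mem_empty_iff_false, iff_false]
    rintro ⟨h1, h2⟩
    exact hOuOv t (hsrcOu P₂ hP₂A h1) (hrngOv P₂ hP₂A h2)
  have hmod1 := isMod_swap hP₁cob hsr1
  have hmod2 := isMod_swap hP₂cob hsr2
  -- disjointness of footprints
  have hdis : rngIm (P₁ ∪ setInv P₁) ∩ rngIm (P₂ ∪ setInv P₂) = ∅ := by
    rw [rngIm_union, rngIm_union, rngIm_setInv, rngIm_setInv]
    ext t
    simp only [Set.mem_inter_iff, Set.mem_union, Set.mem_empty_iff_false, iff_false]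
    rintro ⟨h1 | h1, h2 | h2⟩
    · -- ranges of P₁ and P₂ : use injectivity of the range map on A
      obtain ⟨p, hp, rfl⟩ := h1
      obtain ⟨p', hp', hpe⟩ := h2
      have : p' = p := hACOB.1.2.1 p' (hP₂A hp') p (hP₁A hp) hpe
      subst this
      have hu1 : p'⁻¹ * p' ∈ U1 := (hp.2).2
      have hu2 : p'⁻¹ * p' ∈ U2 := (hp'.2).2
      exact Set.disjoint_left.mp hQdisj (hU2sub hu2) (hU1sub hu1)
    · exact hOuOv t (hsrcOu P₂ hP₂A h2) (hrngOv P₁ hP₁A h1)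
    · exact hOuOv t (hsrcOu P₁ hP₁A h1) (hrngOv P₂ hP₂A h2)
    · exact Set.disjoint_left.mp hQdisj (hU2sub (hsrc2 h2)) (hU1sub (hsrc1 h1))
  exact square_dep hcomp hmod1 hmod2 hdis
    ⟨a, Or.inl haP₁, hanu⟩
    ⟨b, Or.inl hbP₂, (hAsub hbA).1.1.2⟩

/-- In the isotropy case, two nontrivial isotropy elements over distinct units give a
linear dependence. -/
lemma iso_case_dep (hcomp : IsCompact (unitSpace G))
    (hIso : ∀ a : G, a * a⁻¹ = a⁻¹ * a) {g h u v : G}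
    (hg0 : g ≠ 0) (hgu : g ≠ u) (hgs : g⁻¹ * g = u)
    (hh0 : h ≠ 0) (hhv : h ≠ v) (hhs : h⁻¹ * h = v) (huv : u ≠ v) :
    ¬ LinearIndependent ℂ
      (fun B : {B : Set G // B ∈ fullBisections G} => indic B.1) := by
  obtain ⟨Ou, Ov, hOuo, hOvo, huO, hvO, hOdisj⟩ := t2_separation huv
  have hgΩ : g ∈ {x : G | x ≠ 0} ∩ srcPre Ou := ⟨hg0, hg0, by rw [hgs]; exact huO⟩
  have hhΩ : h ∈ {x : G | x ≠ 0} ∩ srcPre Ov := ⟨hh0, hh0, by rw [hhs]; exact hvO⟩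
  obtain ⟨A, hACOB, hgA, hAsub⟩ := AmpleGroupoid.ample_basis' g _ hg0
    (isOpen_nz.inter (isOpen_srcPre hOuo)) hgΩ
  obtain ⟨A', hA'COB, hhA', hA'sub⟩ := AmpleGroupoid.ample_basis' h _ hh0
    (isOpen_nz.inter (isOpen_srcPre hOvo)) hhΩ
  have hiso_eq : ∀ B : Set G, srcIm B = rngIm B := by
    intro B
    unfold srcIm rngIm
    apply Set.image_congr
    intro x _
    exact (hIso x).symm
  have hmod1 : IsMod A := ⟨hACOB, hiso_eq A⟩
  have hmod2 : IsMod A' := ⟨hA'COB, hiso_eq A'⟩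
  have hdis : rngIm A ∩ rngIm A' = ∅ := by
    rw [← hiso_eq A, ← hiso_eq A']
    ext t
    simp only [Set.mem_inter_iff, Set.mem_empty_iff_false, iff_false]
    rintro ⟨⟨p, hp, rfl⟩, ⟨p', hp', hpe⟩⟩
    have h1 : p⁻¹ * p ∈ Ou := (hAsub hp).2.2
    have h2 : p'⁻¹ * p' ∈ Ov := (hA'sub hp').2.2
    have h2' : p⁻¹ * p ∈ Ov := by
      have : p'⁻¹ * p' = p⁻¹ * p := hpe
      rwa [this] at h2
    exact Set.disjoint_left.mp hOdisj h1 h2'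
  exact square_dep hcomp hmod1 hmod2 hdis
    ⟨g, hgA, nonunit_of_iso hg0 hgs hgu⟩
    ⟨h, hhA', nonunit_of_iso hh0 hhs hhv⟩

end Dichotomy
section TwoArrows

variable {G : Type*} [TopologicalSpace G] [AmpleGroupoid G]

/-- Parallel dependence from two distinct isolated arrows with equal source and range. -/
lemma spar_dep (hcomp : IsCompact (unitSpace G)) {p q : G}
    (hp0 : p ≠ 0) (hq0 : q ≠ 0) (hpq : p ≠ q)
    (hop : IsOpen ({p} : Set G)) (hoq : IsOpen ({q} : Set G))
    (hseq : q⁻¹ * q = p⁻¹ * p) (hreq : q * q⁻¹ = p * p⁻¹)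
    (hprs : p * p⁻¹ ≠ p⁻¹ * p) :
    ¬ LinearIndependent ℂ
      (fun B : {B : Set G // B ∈ fullBisections G} => indic B.1) := by
  apply parallel_dep hcomp (isCOB_of_isOpen_singleton hp0 hop)
    (isCOB_of_isOpen_singleton hq0 hoq)
  · rw [srcIm_singleton, srcIm_singleton, hseq]
  · rw [rngIm_singleton, rngIm_singleton, hreq]
  · rw [srcIm_singleton, rngIm_singleton]
    exact singleton_inter_empty (Ne.symm hprs)
  · exact singleton_inter_empty hpq
  · exact ⟨p, rfl⟩

/-- Square dependence from two isolated arrows with disjoint endpoint pairs. -/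
lemma ssq_dep (hcomp : IsCompact (unitSpace G)) {p q : G}
    (hp0 : p ≠ 0) (hq0 : q ≠ 0)
    (hprs : p * p⁻¹ ≠ p⁻¹ * p) (hqrs : q * q⁻¹ ≠ q⁻¹ * q)
    (hop : IsOpen ({p} : Set G)) (hoq : IsOpen ({q} : Set G))
    (hss : p⁻¹ * p ≠ q⁻¹ * q) (hsr : p⁻¹ * p ≠ q * q⁻¹)
    (hrs : p * p⁻¹ ≠ q⁻¹ * q) (hrr : p * p⁻¹ ≠ q * q⁻¹) :
    ¬ LinearIndependent ℂ
      (fun B : {B : Set G // B ∈ fullBisections G} => indic B.1) := by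
  have hm1 : IsMod ({p} ∪ setInv {p} : Set G) := by
    apply isMod_swap (isCOB_of_isOpen_singleton hp0 hop)
    rw [srcIm_singleton, rngIm_singleton]
    exact singleton_inter_empty (Ne.symm hprs)
  have hm2 : IsMod ({q} ∪ setInv {q} : Set G) := by
    apply isMod_swap (isCOB_of_isOpen_singleton hq0 hoq)
    rw [srcIm_singleton, rngIm_singleton]
    exact singleton_inter_empty (Ne.symm hqrs)
  apply square_dep hcomp hm1 hm2
  · rw [rngIm_union, rngIm_union, rngIm_setInv, rngIm_setInv, rngIm_singleton,
      rngIm_singleton, srcIm_singleton, srcIm_singleton]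
    ext t
    simp only [Set.mem_inter_iff, Set.mem_union, Set.mem_singleton_iff,
      Set.mem_empty_iff_false, iff_false]
    rintro ⟨rfl | rfl, h2⟩
    · rcases h2 with h2 | h2
      · exact hrr h2
      · exact hrs h2
    · rcases h2 with h2 | h2
      · exact hsr h2
      · exact hss h2
  · exact ⟨p, Or.inl rfl, nonunit_of_rs_ne hprs⟩
  · exact ⟨q, Or.inl rfl, nonunit_of_rs_ne hqrs⟩

lemma two_arrows_dep (hcomp : IsCompact (unitSpace G)) {a γ : G}
    (ha0 : a ≠ 0) (hars : a * a⁻¹ ≠ a⁻¹ * a) (hoa : IsOpen ({a} : Set G))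
    (hg0 : γ ≠ 0) (hgrs : γ * γ⁻¹ ≠ γ⁻¹ * γ) (hog : IsOpen ({γ} : Set G))
    (hga : γ ≠ a) (hgai : γ ≠ a⁻¹) :
    ¬ LinearIndependent ℂ
      (fun B : {B : Set G // B ∈ fullBisections G} => indic B.1) := by
  have hou : IsOpen ({a⁻¹ * a} : Set G) := isOpen_src_singleton ha0 hoa
  have hov : IsOpen ({a * a⁻¹} : Set G) := isOpen_rng_singleton ha0 hoa
  have hou' : IsOpen ({γ⁻¹ * γ} : Set G) := isOpen_src_singleton hg0 hog
  have hov' : IsOpen ({γ * γ⁻¹} : Set G) := isOpen_rng_singleton hg0 hog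
  have hu : a⁻¹ * a ∈ unitSpace G := src_mem_unit ha0
  have hv : a * a⁻¹ ∈ unitSpace G := rng_mem_unit ha0
  have hu' : γ⁻¹ * γ ∈ unitSpace G := src_mem_unit hg0
  have hv' : γ * γ⁻¹ ∈ unitSpace G := rng_mem_unit hg0
  have huv : a⁻¹ * a ≠ a * a⁻¹ := Ne.symm hars
  by_cases h1 : γ⁻¹ * γ = a⁻¹ * a
  · by_cases h2 : γ * γ⁻¹ = a * a⁻¹
    · exact spar_dep hcomp ha0 hg0 (Ne.symm hga) hoa hog h1 h2 hars
    · -- triangle on u, v, q := γγ⁻¹ with x = a, y = γ, z = γ * a⁻¹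
      have hz0 : γ * a⁻¹ ≠ 0 :=
        comp_of_match hg0 (inv_ne_zero' ha0) (by rw [gz_inv_inv, h1])
      have hzs : (γ * a⁻¹)⁻¹ * (γ * a⁻¹) = a * a⁻¹ := by
        rw [src_of_mul hz0, gz_inv_inv]
      have hzr : (γ * a⁻¹) * (γ * a⁻¹)⁻¹ = γ * γ⁻¹ := rng_of_mul hz0
      have hoz : IsOpen ({γ * a⁻¹} : Set G) := by
        refine (isCOB_singleton_of_src_isolated hz0 ?_).2.2
        rw [hzs]; exact hov
      have huq : a⁻¹ * a ≠ γ * γ⁻¹ := by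
        rw [← h1]; exact Ne.symm hgrs
      exact triangle_dep hcomp hu hv hv' huv huq (Ne.symm h2) hou hov hov'
        ha0 rfl rfl hg0 h1 rfl hz0 hzs hzr hoa hog hoz
  · by_cases h1' : γ⁻¹ * γ = a * a⁻¹
    · by_cases h2 : γ * γ⁻¹ = a⁻¹ * a
      · -- γ : v → u, use γ⁻¹ parallel to a
        refine spar_dep hcomp ha0 (inv_ne_zero' hg0) ?_ hoa
          (isOpen_inv_singleton hog) ?_ ?_ hars
        · intro h; exact hgai (by rw [h, gz_inv_inv])
        · rw [gz_inv_inv]; exact h2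
        · rw [gz_inv_inv]; exact h1'
      · -- γ : v → q: triangle x = a : u→v, y = γ*a : u→q, z = γ : v→q
        have hy0 : γ * a ≠ 0 := comp_of_match hg0 ha0 h1'
        have hys : (γ * a)⁻¹ * (γ * a) = a⁻¹ * a := src_of_mul hy0
        have hyr : (γ * a) * (γ * a)⁻¹ = γ * γ⁻¹ := rng_of_mul hy0
        have hoy : IsOpen ({γ * a} : Set G) := by
          refine (isCOB_singleton_of_src_isolated hy0 ?_).2.2
          rw [hys]; exact hou
        have hvq : a * a⁻¹ ≠ γ * γ⁻¹ := by
          rw [← h1']; exact Ne.symm hgrs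
        exact triangle_dep hcomp hu hv hv' huv (Ne.symm h2) hvq hou hov hov'
          ha0 rfl rfl hy0 hys hyr hg0 h1' rfl hoa hoy hog
    · by_cases h2 : γ * γ⁻¹ = a * a⁻¹
      · -- γ : w → v: triangle (U,V,Q) = (u, w, v), x = γ⁻¹*a, y = a, z = γ
        have hx0 : γ⁻¹ * a ≠ 0 :=
          comp_of_match (inv_ne_zero' hg0) ha0 (by rw [gz_inv_inv]; exact h2)
        have hxs : (γ⁻¹ * a)⁻¹ * (γ⁻¹ * a) = a⁻¹ * a := src_of_mul hx0
        have hxr : (γ⁻¹ * a) * (γ⁻¹ * a)⁻¹ = γ⁻¹ * γ := by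
          rw [rng_of_mul hx0, gz_inv_inv]
        have hox : IsOpen ({γ⁻¹ * a} : Set G) := by
          refine (isCOB_singleton_of_src_isolated hx0 ?_).2.2
          rw [hxs]; exact hou
        exact triangle_dep hcomp hu hu' hv (Ne.symm h1) huv h1' hou hou' hov
          hx0 hxs hxr ha0 rfl rfl hg0 rfl h2 hox hoa hog
      · by_cases h2' : γ * γ⁻¹ = a⁻¹ * a
        · -- γ : w → u: triangle (U,V,Q) = (w, u, v), x = γ, y = a*γ, z = a
          have hy0 : a * γ ≠ 0 := comp_of_match ha0 hg0 h2'.symm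
          have hys : (a * γ)⁻¹ * (a * γ) = γ⁻¹ * γ := src_of_mul hy0
          have hyr : (a * γ) * (a * γ)⁻¹ = a * a⁻¹ := rng_of_mul hy0
          have hoy : IsOpen ({a * γ} : Set G) := by
            refine (isCOB_singleton_of_src_isolated hy0 ?_).2.2
            rw [hys]; exact hou'
          exact triangle_dep hcomp hu' hu hv h1 h1' huv hou' hou hov
            hg0 rfl h2' hy0 hys hyr ha0 rfl rfl hog hoy hoa
        · -- disjoint endpoints : square of singleton swaps
          exact ssq_dep hcomp ha0 hg0 hars hgrs hoa hog
            (Ne.symm h1) (Ne.symm h2') (Ne.symm h1') (Ne.symm h2)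
end TwoArrows
section Converse

variable {G : Type*} [TopologicalSpace G] [AmpleGroupoid G]

lemma full_mem_ne_zero {B : Set G} (hB : B ∈ fullBisections G) {b : G} (hb : b ∈ B) :
    b ≠ 0 := by
  rintro rfl; exact hB.1.1.1 hb

lemma full_source_exists {B : Set G} (hB : B ∈ fullBisections G) {w : G}
    (hw : w ∈ unitSpace G) : ∃ b ∈ B, b⁻¹ * b = w := by
  have h := hB.2.2
  rw [← h] at hw
  obtain ⟨b, hb, he⟩ := hw
  exact ⟨b, hb, he⟩

lemma full_units_eq {B : Set G} (hB : B ∈ fullBisections G)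
    (hall : ∀ b ∈ B, b ∈ unitSpace G) : B = unitSpace G := by
  apply Set.Subset.antisymm
  · intro b hb; exact hall b hb
  · intro w hw
    obtain ⟨b, hb, he⟩ := full_source_exists hB hw
    exact ((unit_src (hall b hb)).symm.trans he) ▸ hb

lemma case1_structure (hIso : ∀ a : G, a * a⁻¹ = a⁻¹ * a)
    (hH2 : ∀ u v : G, (∃ a : G, a ≠ 0 ∧ a ≠ u ∧ a * a⁻¹ = u ∧ a⁻¹ * a = u) →
      (∃ b : G, b ≠ 0 ∧ b ≠ v ∧ b * b⁻¹ = v ∧ b⁻¹ * b = v) → u = v)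
    {B : Set G} (hB : B ∈ fullBisections G) {g : G} (hgB : g ∈ B)
    (hgnu : g ∉ unitSpace G) :
    B = (unitSpace G \ {g⁻¹ * g}) ∪ {g} := by
  have hg0 : g ≠ 0 := full_mem_ne_zero hB hgB
  have hwitg : ∃ a : G, a ≠ 0 ∧ a ≠ g⁻¹ * g ∧ a * a⁻¹ = g⁻¹ * g ∧ a⁻¹ * a = g⁻¹ * g :=
    ⟨g, hg0, fun h => hgnu (by rw [h]; exact src_mem_unit hg0), hIso g, rfl⟩
  have huniq : ∀ b ∈ B, b ∉ unitSpace G → b = g := by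
    intro b hb hbnu
    have hb0 := full_mem_ne_zero hB hb
    have hwitb : ∃ a : G, a ≠ 0 ∧ a ≠ b⁻¹ * b ∧ a * a⁻¹ = b⁻¹ * b ∧ a⁻¹ * a = b⁻¹ * b :=
      ⟨b, hb0, fun h => hbnu (by rw [h]; exact src_mem_unit hb0), hIso b, rfl⟩
    exact hB.1.1.2.2 b hb g hgB (hH2 _ _ hwitb hwitg)
  apply Set.Subset.antisymm
  · intro b hb
    by_cases hbu : b ∈ unitSpace G
    · left
      refine ⟨hbu, ?_⟩
      rw [Set.mem_singleton_iff]
      intro h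
      have hbg : b = g := hB.1.1.2.2 b hb g hgB (by rw [unit_src hbu]; exact h)
      exact hgnu (hbg ▸ hbu)
    · right; exact huniq b hb hbu
  · rintro b (⟨hbu, hbne⟩ | hbg)
    · obtain ⟨c, hc, hce⟩ := full_source_exists hB hbu
      by_cases hcu : c ∈ unitSpace G
      · exact ((unit_src hcu).symm.trans hce) ▸ hc
      · exfalso
        have hcg := huniq c hc hcu
        rw [hcg] at hce
        exact hbne hce.symm
    · rw [Set.mem_singleton_iff] at hbg; exact hbg ▸ hgB

lemma case1_li (hcomp : IsCompact (unitSpace G)) (hne : ∃ a : G, a ≠ 0)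
    (hIso : ∀ a : G, a * a⁻¹ = a⁻¹ * a)
    (hH2 : ∀ u v : G, (∃ a : G, a ≠ 0 ∧ a ≠ u ∧ a * a⁻¹ = u ∧ a⁻¹ * a = u) →
      (∃ b : G, b ≠ 0 ∧ b ≠ v ∧ b * b⁻¹ = v ∧ b⁻¹ * b = v) → u = v) :
    LinearIndependent ℂ
      (fun B : {B : Set G // B ∈ fullBisections G} => indic B.1) := by
  apply li_of_sep
  intro s B hBs
  by_cases hBnu : ∃ g ∈ B.1, g ∉ unitSpace G
  · obtain ⟨g, hgB, hgnu⟩ := hBnu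
    refine ⟨g, hgB, ?_⟩
    intro C hCs hCB hgC
    apply hCB
    apply Subtype.ext
    rw [case1_structure hIso hH2 C.2 hgC hgnu, case1_structure hIso hH2 B.2 hgB hgnu]
  · push_neg at hBnu
    have hBX : B.1 = unitSpace G := full_units_eq B.2 hBnu
    by_cases hex : ∃ C ∈ s, C ≠ B
    · obtain ⟨C₀, hC₀s, hC₀B⟩ := hex
      have hC₀nu : ∃ g ∈ C₀.1, g ∉ unitSpace G := by
        by_contra hno
        push_neg at hno
        exact hC₀B (Subtype.ext ((full_units_eq C₀.2 hno).trans hBX.symm))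
      obtain ⟨g₀, hg₀C, hg₀nu⟩ := hC₀nu
      have hg₀0 : g₀ ≠ 0 := full_mem_ne_zero C₀.2 hg₀C
      refine ⟨g₀⁻¹ * g₀, by rw [hBX]; exact src_mem_unit hg₀0, ?_⟩
      intro C hCs hCB hmem
      have hCnu : ∃ g ∈ C.1, g ∉ unitSpace G := by
        by_contra hno
        push_neg at hno
        exact hCB (Subtype.ext ((full_units_eq C.2 hno).trans hBX.symm))
      obtain ⟨gc, hgcC, hgcnu⟩ := hCnu
      have hgc0 : gc ≠ 0 := full_mem_ne_zero C.2 hgcC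
      rw [case1_structure hIso hH2 C.2 hgcC hgcnu] at hmem
      rcases hmem with ⟨-, hu2⟩ | hu3
      · apply hu2
        rw [Set.mem_singleton_iff]
        exact hH2 _ _
          ⟨g₀, hg₀0, fun h => hg₀nu (by rw [h]; exact src_mem_unit hg₀0), hIso g₀, rfl⟩
          ⟨gc, hgc0, fun h => hgcnu (by rw [h]; exact src_mem_unit hgc0), hIso gc, rfl⟩
      · rw [Set.mem_singleton_iff] at hu3
        exact absurd (hu3 ▸ src_mem_unit hg₀0) hgcnu
    · push_neg at hex
      obtain ⟨a0, ha0⟩ := hne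
      refine ⟨a0⁻¹ * a0, by rw [hBX]; exact src_mem_unit ha0, ?_⟩
      intro C hCs hCB _
      exact absurd (hex C hCs) hCB

lemma case2_structure {a : G} (ha0 : a ≠ 0) (hars : a * a⁻¹ ≠ a⁻¹ * a)
    (h3 : ¬ ∃ x y z : G, x ≠ 0 ∧ y ≠ 0 ∧ z ≠ 0 ∧ x ∉ unitSpace G ∧ y ∉ unitSpace G ∧
      z ∉ unitSpace G ∧ x ≠ y ∧ x ≠ z ∧ y ≠ z)
    {B : Set G} (hB : B ∈ fullBisections G) :
    B = unitSpace G ∨ B = (unitSpace G \ {a⁻¹ * a, a * a⁻¹}) ∪ {a, a⁻¹} := by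
  have hanu : a ∉ unitSpace G := nonunit_of_rs_ne hars
  have hai0 : a⁻¹ ≠ 0 := inv_ne_zero' ha0
  have hainu : a⁻¹ ∉ unitSpace G := by
    apply nonunit_of_rs_ne
    rw [gz_inv_inv]
    exact Ne.symm hars
  have haai : a ≠ a⁻¹ := by
    intro h
    exact hars (by rw [show a⁻¹ = a from h.symm])
  have hnuin : ∀ c : G, c ≠ 0 → c ∉ unitSpace G → c = a ∨ c = a⁻¹ := by
    intro c hc0 hcnu
    by_contra hcc
    push_neg at hcc
    exact h3 ⟨a, a⁻¹, c, ha0, hai0, hc0, hanu, hainu, hcnu, haai,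
      Ne.symm hcc.1, Ne.symm hcc.2⟩
  by_cases haB : a ∈ B
  case neg =>
    left
    apply full_units_eq hB
    intro b hb
    by_contra hbnu
    rcases hnuin b (full_mem_ne_zero hB hb) hbnu with rfl | rfl
    · exact haB hb
    · obtain ⟨c, hcB, hce⟩ := full_source_exists hB (src_mem_unit ha0)
      by_cases hcu : c ∈ unitSpace G
      · have hcu' : c = a⁻¹ * a := (unit_src hcu).symm.trans hce
        have hca : c = a⁻¹ := hB.1.1.2.1 c hcB a⁻¹ hb
          (by rw [unit_rng hcu, hcu', gz_inv_inv])
        exact hainu (hca ▸ hcu)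
      · rcases hnuin c (full_mem_ne_zero hB hcB) hcu with rfl | rfl
        · exact haB hcB
        · exact hars (by rwa [gz_inv_inv] at hce)
  case pos =>
    right
    have haiB : a⁻¹ ∈ B := by
      obtain ⟨c, hcB, hce⟩ := full_source_exists hB (rng_mem_unit ha0)
      by_cases hcu : c ∈ unitSpace G
      · exfalso
        have hcv : c = a * a⁻¹ := (unit_src hcu).symm.trans hce
        have hac : a = c := hB.1.1.2.1 a haB c hcB (by rw [unit_rng hcu, hcv])
        exact hanu (hac ▸ hcu)
      · rcases hnuin c (full_mem_ne_zero hB hcB) hcu with rfl | rfl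
        · exact absurd hce.symm hars
        · exact hcB
    apply Set.Subset.antisymm
    · intro b hb
      by_cases hbu : b ∈ unitSpace G
      · left
        refine ⟨hbu, ?_⟩
        intro hmem
        rcases hmem with h | h
        · have hba : b = a := hB.1.1.2.2 b hb a haB (by rw [unit_src hbu]; exact h)
          exact hanu (hba ▸ hbu)
        · rw [Set.mem_singleton_iff] at h
          have hba : b = a⁻¹ := hB.1.1.2.2 b hb a⁻¹ haiB
            (by rw [unit_src hbu, gz_inv_inv]; exact h)
          exact hainu (hba ▸ hbu)
      · right
        rcases hnuin b (full_mem_ne_zero hB hb) hbu with rfl | rfl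
        · exact Set.mem_insert _ _
        · exact Set.mem_insert_of_mem _ rfl
    · rintro b (⟨hbu, hbne⟩ | hb)
      · obtain ⟨c, hcB, hce⟩ := full_source_exists hB hbu
        by_cases hcu : c ∈ unitSpace G
        · exact ((unit_src hcu).symm.trans hce) ▸ hcB
        · exfalso
          rcases hnuin c (full_mem_ne_zero hB hcB) hcu with rfl | rfl
          · exact hbne (Or.inl hce.symm)
          · apply hbne
            right
            rw [Set.mem_singleton_iff, ← hce, gz_inv_inv]
      · rcases hb with rfl | hb
        · exact haB
        · rw [Set.mem_singleton_iff] at hb; exact hb ▸ haiB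

lemma case2_li (hcomp : IsCompact (unitSpace G)) {a : G} (ha0 : a ≠ 0)
    (hars : a * a⁻¹ ≠ a⁻¹ * a)
    (h3 : ¬ ∃ x y z : G, x ≠ 0 ∧ y ≠ 0 ∧ z ≠ 0 ∧ x ∉ unitSpace G ∧ y ∉ unitSpace G ∧
      z ∉ unitSpace G ∧ x ≠ y ∧ x ≠ z ∧ y ≠ z) :
    LinearIndependent ℂ
      (fun B : {B : Set G // B ∈ fullBisections G} => indic B.1) := by
  have hanu : a ∉ unitSpace G := nonunit_of_rs_ne hars
  have hai0 : a⁻¹ ≠ 0 := inv_ne_zero' ha0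
  have hainu : a⁻¹ ∉ unitSpace G := by
    apply nonunit_of_rs_ne
    rw [gz_inv_inv]
    exact Ne.symm hars
  apply li_of_sep
  intro s B hBs
  rcases case2_structure ha0 hars h3 B.2 with hX | hX'
  · refine ⟨a⁻¹ * a, by rw [hX]; exact src_mem_unit ha0, ?_⟩
    intro C hCs hCB hmem
    rcases case2_structure ha0 hars h3 C.2 with hCX | hCX'
    · exact hCB (Subtype.ext (hCX.trans hX.symm))
    · rw [hCX'] at hmem
      rcases hmem with ⟨-, hne2⟩ | hmem
      · exact hne2 (Or.inl rfl)
      · rcases hmem with h | h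
        · exact hanu (unit_of_src_eq ha0 h)
        · rw [Set.mem_singleton_iff] at h
          exact hainu (unit_of_rng_eq hai0 (by rwa [gz_inv_inv]))
  · refine ⟨a, by rw [hX']; exact Set.mem_union_right _ (Set.mem_insert _ _), ?_⟩
    intro C hCs hCB hmem
    rcases case2_structure ha0 hars h3 C.2 with hCX | hCX'
    · rw [hCX] at hmem
      exact hanu hmem
    · exact hCB (Subtype.ext (hCX'.trans hX'.symm))

end Converse

end RepAux

/-- The representation `π : ℂF(G) → A(G)` is injective (equivalently, the
family of indicators of full compact open bisections is linearly independent) iff either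
(1) `G = Iso(G)` and `G` has at most one nontrivial isotropy group, or
(2) `G ≠ Iso(G)` and `G` has fewer than three non-unit elements. -/
theorem rep_injective_iff {G : Type*} [TopologicalSpace G] [AmpleGroupoid G]
    (hcomp : IsCompact (unitSpace G)) (hne : ∃ a : G, a ≠ 0) :
    LinearIndependent ℂ
        (fun B : {B : Set G // B ∈ fullBisections G} => indic B.1) ↔
      ((∀ a : G, a * a⁻¹ = a⁻¹ * a) ∧
        (∀ u v : G, (∃ a : G, a ≠ 0 ∧ a ≠ u ∧ a * a⁻¹ = u ∧ a⁻¹ * a = u) →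
          (∃ b : G, b ≠ 0 ∧ b ≠ v ∧ b * b⁻¹ = v ∧ b⁻¹ * b = v) → u = v)) ∨
      ((∃ a : G, a ≠ 0 ∧ a * a⁻¹ ≠ a⁻¹ * a) ∧
        ¬ ∃ a b c : G, a ≠ 0 ∧ b ≠ 0 ∧ c ≠ 0 ∧
          a ∉ unitSpace G ∧ b ∉ unitSpace G ∧ c ∉ unitSpace G ∧ a ≠ b ∧ a ≠ c ∧ b ≠ c) := by
  constructor
  · intro hli
    by_contra hnot
    rw [not_or] at hnot
    obtain ⟨hn1, hn2⟩ := hnot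
    by_cases hIso : ∀ a : G, a * a⁻¹ = a⁻¹ * a
    · have hH2 : ¬ ∀ u v : G, (∃ a : G, a ≠ 0 ∧ a ≠ u ∧ a * a⁻¹ = u ∧ a⁻¹ * a = u) →
          (∃ b : G, b ≠ 0 ∧ b ≠ v ∧ b * b⁻¹ = v ∧ b⁻¹ * b = v) → u = v :=
        fun h => hn1 ⟨hIso, h⟩
      push_neg at hH2
      obtain ⟨u, v, ⟨g, hg0, hgu, hgr, hgs⟩, ⟨h, hh0, hhv, hhr, hhs⟩, huv⟩ := hH2
      exact RepAux.iso_case_dep hcomp hIso hg0 hgu hgs hh0 hhv hhs huv hli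
    · push_neg at hIso
      obtain ⟨a, hars⟩ := hIso
      have ha0 : a ≠ 0 := by
        rintro rfl
        exact hars (by rw [GroupoidZ.inv_zero'])
      have h3 : ∃ x y z : G, x ≠ 0 ∧ y ≠ 0 ∧ z ≠ 0 ∧ x ∉ unitSpace G ∧
          y ∉ unitSpace G ∧ z ∉ unitSpace G ∧ x ≠ y ∧ x ≠ z ∧ y ≠ z := by
        by_contra hc
        exact hn2 ⟨⟨a, ha0, hars⟩, hc⟩
      obtain ⟨x, y, z, hx0, hy0, hz0, hxX, hyX, hzX, hxy, hxz, hyz⟩ := h3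
      have hcex : ∃ c : G, c ≠ 0 ∧ c ∉ unitSpace G ∧ c ≠ a ∧ c ≠ a⁻¹ := by
        by_cases h1 : x ≠ a ∧ x ≠ a⁻¹
        · exact ⟨x, hx0, hxX, h1.1, h1.2⟩
        by_cases h2 : y ≠ a ∧ y ≠ a⁻¹
        · exact ⟨y, hy0, hyX, h2.1, h2.2⟩
        by_cases h3' : z ≠ a ∧ z ≠ a⁻¹
        · exact ⟨z, hz0, hzX, h3'.1, h3'.2⟩
        exfalso
        have mk : ∀ w : G, ¬(w ≠ a ∧ w ≠ a⁻¹) → w = a ∨ w = a⁻¹ := by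
          intro w hw
          by_cases hwa : w = a
          · exact Or.inl hwa
          · right
            by_contra hwi
            exact hw ⟨hwa, hwi⟩
        have e1 := mk x h1
        have e2 := mk y h2
        have e3 := mk z h3'
        rcases e1 with rfl | rfl <;> rcases e2 with rfl | rfl <;>
          rcases e3 with rfl | rfl <;>
          first
            | exact hxy rfl
            | exact hxz rfl
            | exact hyz rfl
      obtain ⟨c, hc0, hcnu, hca, hcai⟩ := hcex
      rcases RepAux.arrow_dichotomy hcomp ha0 hars with hdep | hoa
      · exact hdep hli
      have hou : IsOpen ({a⁻¹ * a} : Set G) := RepAux.isOpen_src_singleton ha0 hoa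
      have hov : IsOpen ({a * a⁻¹} : Set G) := RepAux.isOpen_rng_singleton ha0 hoa
      by_cases hciso : c * c⁻¹ = c⁻¹ * c
      · by_cases hpu : c⁻¹ * c = a⁻¹ * a
        · have hac0 : a * c ≠ 0 := RepAux.comp_of_match ha0 hc0 (by rw [hciso, hpu])
          have haca : a * c ≠ a := by
            intro h
            have hcu := RepAux.mul_right_unique h hc0 ha0
            exact hcnu (by rw [hcu]; exact RepAux.src_mem_unit ha0)
          have hsac : (a * c)⁻¹ * (a * c) = a⁻¹ * a := by
            rw [RepAux.src_of_mul hac0, hpu]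
          have hrac : (a * c) * (a * c)⁻¹ = a * a⁻¹ := RepAux.rng_of_mul hac0
          have hoac : IsOpen ({a * c} : Set G) := by
            refine (RepAux.isCOB_singleton_of_src_isolated hac0 ?_).2.2
            rw [hsac]; exact hou
          exact RepAux.spar_dep hcomp ha0 hac0 (Ne.symm haca) hoa hoac hsac hrac hars hli
        · by_cases hpv : c⁻¹ * c = a * a⁻¹
          · have hca0 : c * a ≠ 0 := RepAux.comp_of_match hc0 ha0 hpv
            have hcaa : c * a ≠ a := by
              intro h
              have hcu := RepAux.mul_left_unique h hc0 ha0
              exact hcnu (by rw [hcu]; exact RepAux.rng_mem_unit ha0)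
            have hsca : (c * a)⁻¹ * (c * a) = a⁻¹ * a := RepAux.src_of_mul hca0
            have hrca : (c * a) * (c * a)⁻¹ = a * a⁻¹ := by
              rw [RepAux.rng_of_mul hca0, hciso, hpv]
            have hoca : IsOpen ({c * a} : Set G) := by
              refine (RepAux.isCOB_singleton_of_src_isolated hca0 ?_).2.2
              rw [hsca]; exact hou
            exact RepAux.spar_dep hcomp ha0 hca0 (Ne.symm hcaa) hoa hoca hsca hrca hars hli
          · set Ωc : Set G := ({x : G | x ≠ 0} ∩ (unitSpace G)ᶜ) ∩
              (({a}ᶜ : Set G) ∩ ({a⁻¹}ᶜ : Set G)) with hΩcdef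
            have hΩco : IsOpen Ωc := ((RepAux.isOpen_nz.inter
              AmpleGroupoid.isClosed_unitSpace'.isOpen_compl)).inter
              ((isClosed_singleton.isOpen_compl).inter isClosed_singleton.isOpen_compl)
            have hcΩ : c ∈ Ωc := ⟨⟨hc0, hcnu⟩, hca, hcai⟩
            obtain ⟨C, hCcob, hcC, hCsub⟩ := AmpleGroupoid.ample_basis' c Ωc hc0 hΩco hcΩ
            by_cases hCiso : ∀ γ ∈ C, γ * γ⁻¹ = γ⁻¹ * γ
            · have hC0 : (0:G) ∉ C := hCcob.1.1
              set K : Set G := RepAux.srcIm C ∩ (({a⁻¹ * a} ∪ {a * a⁻¹} : Set G))ᶜ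
                with hKdef
              have hKo : IsOpen K := (RepAux.isOpen_srcIm hCcob.2.2 hC0).inter
                ((isClosed_singleton.union isClosed_singleton).isOpen_compl)
              have hKc : IsCompact K := (RepAux.isCompact_srcIm hCcob.2.1 hC0).inter_right
                ((hou.union hov).isClosed_compl)
              have hpK : c⁻¹ * c ∈ K := by
                refine ⟨RepAux.mem_srcIm_of_mem hcC, ?_⟩
                rintro (h | h)
                · exact hpu h
                · exact hpv h
              obtain ⟨hC'cob, hC'src⟩ := RepAux.restrict_src hCcob hKc hKo
              have hcC' : c ∈ C ∩ RepAux.srcPre K := ⟨hcC, hc0, hpK⟩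
              have hmod2 : RepAux.IsMod (C ∩ RepAux.srcPre K) := by
                refine ⟨hC'cob, ?_⟩
                unfold RepAux.srcIm RepAux.rngIm
                apply Set.image_congr
                intro γ hγ
                exact (hCiso γ hγ.1).symm
              have hmod1 : RepAux.IsMod ({a} ∪ setInv {a}) := by
                apply RepAux.isMod_swap (RepAux.isCOB_of_isOpen_singleton ha0 hoa)
                rw [RepAux.srcIm_singleton, RepAux.rngIm_singleton]
                exact RepAux.singleton_inter_empty (Ne.symm hars)
              have hdis : RepAux.rngIm ({a} ∪ setInv {a}) ∩
                  RepAux.rngIm (C ∩ RepAux.srcPre K) = ∅ := by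
                rw [RepAux.rngIm_union, RepAux.rngIm_setInv, RepAux.rngIm_singleton,
                  RepAux.srcIm_singleton, ← hmod2.eq, hC'src]
                ext t
                simp only [Set.mem_inter_iff, Set.mem_union, Set.mem_singleton_iff,
                  Set.mem_empty_iff_false, iff_false]
                rintro ⟨h1, -, h3'⟩
                apply h3'.2
                rcases h1 with rfl | rfl
                · exact Or.inr rfl
                · exact Or.inl rfl
              exact RepAux.square_dep hcomp hmod1 hmod2 hdis
                ⟨a, Or.inl rfl, RepAux.nonunit_of_rs_ne hars⟩
                ⟨c, hcC', hcnu⟩ hli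
            · push_neg at hCiso
              obtain ⟨γ, hγC, hγrs⟩ := hCiso
              have hγΩ := hCsub hγC
              rcases RepAux.arrow_dichotomy hcomp hγΩ.1.1 hγrs with hdep | hoγ
              · exact hdep hli
              exact RepAux.two_arrows_dep hcomp ha0 hars hoa hγΩ.1.1 hγrs hoγ
                hγΩ.2.1 hγΩ.2.2 hli
      · rcases RepAux.arrow_dichotomy hcomp hc0 hciso with hdep | hoc
        · exact hdep hli
        exact RepAux.two_arrows_dep hcomp ha0 hars hoa hc0 hciso hoc hca hcai hli
  · rintro (⟨hIso, hH2⟩ | ⟨⟨a, ha0, hars⟩, h3⟩)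
    · exact RepAux.case1_li hcomp hne hIso hH2
    · exact RepAux.case2_li hcomp ha0 hars h3
end
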